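/- arXiv:1607.01602 — 13 statements merged into one kernel-verified Lean document; each statement's English description precedes it below -/
import Mathlib

section
/- Let (V,‖·‖) be a finite dimensional real normed space whose norm is smooth, i.e., for every z ∈ V with ‖z‖ = 1 there is a unique continuous linear functional φ on V with dual norm ‖φ‖* = 1 and φ(z) = 1. If f : V → V is nonexpansive (‖f(x) − f(y)‖ ≤ ‖x − y‖ for all x,y), then the fixed point set Fix(f) = {x ∈ V : f(x) = x} is empty or unbounded if and only if there exists a nonzero continuous linear functional φ on V such that φ(f(x)) ≥ φ(x) for all x ∈ V. -/
/-!
If `f` has no fixed point, the fixed points `qₙ` of the contractions `cₙ • f` with `cₙ ↑ 1` escape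
to infinity (a convergent subsequence would converge to a fixed point of `f`) and satisfy
`f qₙ = cₙ⁻¹ • qₙ`; if the fixed point set is unbounded, take fixed points
`qₙ` escaping to infinity. For fixed `x`, nonexpansiveness gives `ψ x ≤ ψ (f x)` for a norming
functional `ψ` of `qₙ - x`, and smoothness makes these functionals converge to the norming
functional `φ` of a limit direction `z` of `qₙ / ‖qₙ‖`.

Conversely, if `φ ∘ f ≥ φ` and `p` is a fixed point, `f` maps the compact convex cap
`{y ∈ closedBall p t | φ p + t ‖φ‖ ≤ φ y}` into itself. Its fixed points there (limits of fixed
points of the contractions `y ↦ c • f y + (1 - c) • z₀`) lie at distance exactly `t` from `p`.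
-/

open Filter Topology Metric Bornology Function

theorem exists_seq_mem_tendsto_norm_atTop_of_not_isBounded {E : Type*}
    [SeminormedAddCommGroup E] {s : Set E} (hs : ¬ IsBounded s) :
    ∃ q : ℕ → E, (∀ n, q n ∈ s) ∧ Tendsto (fun n => ‖q n‖) atTop atTop := by
  rw [isBounded_iff_forall_norm_le] at hs
  push Not at hs
  choose q hq hqn using fun n : ℕ => hs n
  exact ⟨q, hq, tendsto_atTop_mono (fun n => (hqn n).le) tendsto_natCast_atTop_atTop⟩

theorem continuous_of_forall_norm_sub_le {E F : Type*} [SeminormedAddCommGroup E]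
    [SeminormedAddCommGroup F] {f : E → F} (hf : ∀ x y, ‖f x - f y‖ ≤ ‖x - y‖) :
    Continuous f :=
  (lipschitzWith_iff_norm_sub_le (C := 1).2 fun x y => by simpa using hf x y).continuous

section

variable {V : Type*} [NormedAddCommGroup V] [NormedSpace ℝ V]

theorem exists_isFixedPt_homotopy {K : Set V} (hKc : IsComplete K)
    (hKconv : Convex ℝ K) {z₀ : V} (hz₀ : z₀ ∈ K) {f : V → V}
    (hf : ∀ x y : V, ‖f x - f y‖ ≤ ‖x - y‖) (hfK : Set.MapsTo f K K) {c : ℝ}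
    (hc₀ : 0 ≤ c) (hc₁ : c < 1) :
    ∃ x ∈ K, IsFixedPt (fun y => c • f y + (1 - c) • z₀) x := by
  have hmaps : Set.MapsTo (fun y => c • f y + (1 - c) • z₀) K K := fun y hy =>
    hKconv (hfK hy) hz₀ hc₀ (by linarith) (by ring)
  have hcontr : ContractingWith ⟨c, hc₀⟩ (hmaps.restrict _ K K) := by
    refine ⟨by exact_mod_cast hc₁, LipschitzWith.of_dist_le_mul fun x y => ?_⟩
    simp only [Subtype.dist_eq, Set.MapsTo.val_restrict_apply, dist_eq_norm,
      add_sub_add_right_eq_sub, ← smul_sub, norm_smul, Real.norm_of_nonneg hc₀]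
    exact mul_le_mul_of_nonneg_left (hf x y) hc₀
  obtain ⟨x, hxK, hx, -⟩ :=
    hcontr.exists_fixedPoint' hKc hmaps hz₀ (edist_ne_top _ _)
  exact ⟨x, hxK, hx⟩

theorem isFixedPt_of_tendsto_homotopy {f : V → V} (hf : Continuous f) {c : ℕ → ℝ}
    (hc : Tendsto c atTop (𝓝 1)) {z₀ a : V} {x : ℕ → V}
    (hx : ∀ n, IsFixedPt (fun y => c n • f y + (1 - c n) • z₀) (x n))
    (ha : Tendsto x atTop (𝓝 a)) : IsFixedPt f a := by
  have hlim : Tendsto (fun n => c n • f (x n) + (1 - c n) • z₀) atTop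
      (𝓝 ((1 : ℝ) • f a + (1 - 1 : ℝ) • z₀)) :=
    (hc.smul ((hf.tendsto a).comp ha)).add ((tendsto_const_nhds.sub hc).smul_const z₀)
  rw [one_smul, sub_self, zero_smul, add_zero] at hlim
  exact tendsto_nhds_unique (hlim.congr hx) ha

theorem exists_isFixedPt_of_isCompact_of_convex {K : Set V} (hKc : IsCompact K)
    (hKconv : Convex ℝ K) (hKne : K.Nonempty) {f : V → V}
    (hf : ∀ x y : V, ‖f x - f y‖ ≤ ‖x - y‖) (hfK : Set.MapsTo f K K) :
    ∃ x ∈ K, IsFixedPt f x := by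
  obtain ⟨z₀, hz₀⟩ := hKne
  obtain ⟨c, -, hc01, hc⟩ := exists_seq_strictMono_tendsto' (zero_lt_one' ℝ)
  choose x hxK hx using fun n => exists_isFixedPt_homotopy hKc.isComplete hKconv hz₀ hf hfK
    (hc01 n).1.le (hc01 n).2
  obtain ⟨a, haK, φ, hφ, hxa⟩ := hKc.tendsto_subseq hxK
  exact ⟨a, haK, isFixedPt_of_tendsto_homotopy (continuous_of_forall_norm_sub_le hf)
    (hc.comp hφ.tendsto_atTop) (fun n => hx (φ n)) hxa⟩

theorem exists_seq_map_eq_smul_of_forall_not_isFixedPt [ProperSpace V] {f : V → V}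
    (hf : ∀ x y : V, ‖f x - f y‖ ≤ ‖x - y‖) (hfix : ∀ x, ¬ IsFixedPt f x) :
    ∃ (q : ℕ → V) (r : ℕ → ℝ), (∀ n, 1 ≤ r n) ∧ (∀ n, f (q n) = r n • q n) ∧
      Tendsto (fun n => ‖q n‖) atTop atTop := by
  obtain ⟨c, -, hc01, hc⟩ := exists_seq_strictMono_tendsto' (zero_lt_one' ℝ)
  choose q _ hq using fun n => exists_isFixedPt_homotopy isComplete_univ convex_univ
    (Set.mem_univ 0) hf (Set.mapsTo_univ _ _) (hc01 n).1.le (hc01 n).2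
  refine ⟨q, fun n => (c n)⁻¹, fun n => one_le_inv₀ (hc01 n).1 |>.2 (hc01 n).2.le,
    fun n => ?_, ?_⟩
  · have hqn : c n • f (q n) = q n := by simpa [IsFixedPt] using hq n
    calc f (q n) = (c n)⁻¹ • (c n • f (q n)) := by
          rw [smul_smul, inv_mul_cancel₀ (hc01 n).1.ne', one_smul]
      _ = (c n)⁻¹ • q n := by rw [hqn]
  · by_contra hq_top
    rw [Filter.tendsto_atTop] at hq_top
    push Not at hq_top
    obtain ⟨b, hb⟩ := hq_top
    obtain ⟨a, -, φ, hφ, hqa⟩ :=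
      tendsto_subseq_of_frequently_bounded (isBounded_closedBall (x := 0))
      (hb.mono fun n hn => mem_closedBall_zero_iff.2 hn.le)
    exact hfix a <| isFixedPt_of_tendsto_homotopy (continuous_of_forall_norm_sub_le hf)
      (hc.comp hφ.tendsto_atTop)
      (fun n => hq (φ n)) hqa

theorem tendsto_of_apply_eq_norm [FiniteDimensional ℝ V] {z : V} (hz : ‖z‖ = 1)
    {φ : V →L[ℝ] ℝ} (huniq : ∀ χ : V →L[ℝ] ℝ, ‖χ‖ = 1 → χ z = 1 → χ = φ)
    {ι : Type*} {l : Filter ι} {u : ι → V} (hu : Tendsto u l (𝓝 z))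
    {ψ : ι → V →L[ℝ] ℝ} (hψ : ∀ i, ‖ψ i‖ ≤ 1) (hψu : ∀ i, ψ i (u i) = ‖u i‖) :
    Tendsto ψ l (𝓝 φ) := by
  have hψz : Tendsto (fun i => ψ i z) l (𝓝 1) := by
    have hdiff : Tendsto (fun i => ψ i (z - u i)) l (𝓝 0) := by
      refine squeeze_zero_norm (fun i => ?_) (tendsto_iff_norm_sub_tendsto_zero.1 hu)
      calc ‖ψ i (z - u i)‖ ≤ ‖ψ i‖ * ‖z - u i‖ := (ψ i).le_opNorm _
        _ ≤ ‖u i - z‖ := by rw [norm_sub_rev]; exact mul_le_of_le_one_left (norm_nonneg _) (hψ i)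
    have hnorm : Tendsto (fun i => ‖u i‖) l (𝓝 1) := hz ▸ hu.norm
    simpa [hψu] using hnorm.add hdiff
  refine (isCompact_closedBall (0 : V →L[ℝ] ℝ) 1).tendsto_nhds_of_unique_mapClusterPt
    (Eventually.of_forall fun i => mem_closedBall_zero_iff.2 (hψ i)) fun χ hχ hχψ => ?_
  have hχz : χ z = 1 := by
    have : MapClusterPt (χ z) l (fun i => ψ i z) :=
      hχψ.tendsto_comp ((ContinuousLinearMap.apply ℝ ℝ z).continuous.tendsto χ)
    exact eq_of_nhds_neBot (ClusterPt.mono this hψz)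
  refine huniq χ (le_antisymm (mem_closedBall_zero_iff.1 hχ) ?_) hχz
  simpa [hχz, hz] using χ.le_opNorm z

theorem apply_le_apply_map_of_map_eq_smul {f : V → V}
    (hf : ∀ x y : V, ‖f x - f y‖ ≤ ‖x - y‖) {q : V} {r : ℝ} (hr : 1 ≤ r) (hfq : f q = r • q)
    {ψ : V →L[ℝ] ℝ} (hψ : ‖ψ‖ ≤ 1) (x : V) (hψq : ψ (q - x) = ‖q - x‖) (hq : 0 ≤ ψ q) :
    ψ x ≤ ψ (f x) := by
  have : r * ψ q - ψ (f x) ≤ ψ q - ψ x := by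
    calc r * ψ q - ψ (f x) = ψ (f q - f x) := by simp [hfq]
      _ ≤ ‖ψ‖ * ‖f q - f x‖ := (le_abs_self _).trans (ψ.le_opNorm _)
      _ ≤ ‖q - x‖ := (mul_le_of_le_one_left (norm_nonneg _) hψ).trans (hf q x)
      _ = ψ q - ψ x := by rw [← hψq, map_sub]
  nlinarith

theorem exists_dual_le_apply_map_of_tendsto_norm [FiniteDimensional ℝ V]
    (hsmooth : ∀ z : V, ‖z‖ = 1 → ∃! φ : V →L[ℝ] ℝ, ‖φ‖ = 1 ∧ φ z = 1) {f : V → V}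
    (hf : ∀ x y : V, ‖f x - f y‖ ≤ ‖x - y‖) {q : ℕ → V} {r : ℕ → ℝ} (hr : ∀ n, 1 ≤ r n)
    (hfq : ∀ n, f (q n) = r n • q n) (hq : Tendsto (fun n => ‖q n‖) atTop atTop) :
    ∃ φ : V →L[ℝ] ℝ, φ ≠ 0 ∧ ∀ x, φ x ≤ φ (f x) := by
  have hsphere : ∃ᶠ n in atTop, ‖q n‖⁻¹ • q n ∈ sphere (0 : V) 1 := by
    refine (hq.eventually_gt_atTop 0).frequently.mono fun n hn => ?_
    rw [mem_sphere_zero_iff_norm, norm_smul, norm_inv, norm_norm, inv_mul_cancel₀ hn.ne']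
  obtain ⟨z, hz, g, hg, hqz⟩ := (isCompact_sphere (0 : V) 1).tendsto_subseq' hsphere
  rw [mem_sphere_zero_iff_norm] at hz
  obtain ⟨φ, hφ, huniq⟩ := hsmooth z hz
  refine ⟨φ, fun h => by simpa [h] using hφ.2, fun x => ?_⟩
  set a := q ∘ g
  have ha : Tendsto (fun k => ‖a k‖) atTop atTop := hq.comp hg.tendsto_atTop
  choose ψ hψ hψa using fun k => exists_dual_vector'' ℝ (a k - x)
  simp only [RCLike.ofReal_real_eq_id, id_eq] at hψa
  have hu : Tendsto (fun k => ‖a k‖⁻¹ • (a k - x)) atTop (𝓝 z) := by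
    simpa [a, Function.comp_def, smul_sub] using hqz.sub (ha.inv_tendsto_atTop.smul_const x)
  have hψu : ∀ k, ψ k (‖a k‖⁻¹ • (a k - x)) = ‖‖a k‖⁻¹ • (a k - x)‖ := fun k => by
    rw [map_smul, hψa, norm_smul, norm_inv, norm_norm, smul_eq_mul]
  have hψφ : Tendsto ψ atTop (𝓝 φ) :=
    tendsto_of_apply_eq_norm hz (fun χ h1 h2 => huniq χ ⟨h1, h2⟩) hu hψ hψu
  have hψa_nonneg : ∀ᶠ k in atTop, 0 ≤ ψ k (a k) := by
    filter_upwards [ha.eventually_ge_atTop (2 * ‖x‖)] with k hk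
    have hψx : |ψ k x| ≤ ‖x‖ :=
      ((ψ k).le_opNorm x).trans (mul_le_of_le_one_left (norm_nonneg _) (hψ k))
    have : ψ k (a k) = ‖a k - x‖ + ψ k x := by rw [← hψa, map_sub, sub_add_cancel]
    linarith [norm_sub_norm_le (a k) x, neg_abs_le (ψ k x)]
  have happly : ∀ y, Tendsto (fun k => ψ k y) atTop (𝓝 (φ y)) := fun y =>
    ((ContinuousLinearMap.apply ℝ ℝ y).continuous.tendsto φ).comp hψφ
  refine le_of_tendsto_of_tendsto (happly x) (happly (f x)) ?_
  filter_upwards [hψa_nonneg] with k hk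
  exact apply_le_apply_map_of_map_eq_smul hf (hr (g k)) (hfq (g k)) (hψ k) x (hψa k) hk

theorem ContinuousLinearMap.exists_norm_le_one_apply_eq_norm [ProperSpace V]
    (φ : V →L[ℝ] ℝ) : ∃ u : V, ‖u‖ ≤ 1 ∧ φ u = ‖φ‖ := by
  obtain ⟨u, hu, hmax⟩ := (isCompact_closedBall (0 : V) 1).exists_isMaxOn
    (nonempty_closedBall.2 zero_le_one) (continuous_norm.comp φ.continuous).continuousOn
  have hφu : ‖φ u‖ = ‖φ‖ := by
    rw [← φ.sSup_unitClosedBall_eq_norm]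
    exact (IsGreatest.csSup_eq
      ⟨Set.mem_image_of_mem _ hu, Set.forall_mem_image.2 (isMaxOn_iff.1 hmax)⟩).symm
  rw [mem_closedBall_zero_iff] at hu
  rcases le_total 0 (φ u) with h | h
  · exact ⟨u, hu, by rw [← hφu, Real.norm_of_nonneg h]⟩
  · exact ⟨-u, by rwa [norm_neg], by rw [map_neg, ← hφu, Real.norm_of_nonpos h]⟩

theorem exists_isFixedPt_norm_sub_eq [ProperSpace V] {f : V → V}
    (hf : ∀ x y : V, ‖f x - f y‖ ≤ ‖x - y‖) {φ : V →L[ℝ] ℝ} (hφ : φ ≠ 0)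
    (hφf : ∀ x, φ x ≤ φ (f x)) {p : V} (hp : IsFixedPt f p) {t : ℝ} (ht : 0 ≤ t) :
    ∃ y, IsFixedPt f y ∧ ‖y - p‖ = t := by
  obtain ⟨u, hu, hφu⟩ := φ.exists_norm_le_one_apply_eq_norm
  set K := closedBall p t ∩ {y | φ p + t * ‖φ‖ ≤ φ y}
  have hKc : IsCompact K :=
    (isCompact_closedBall p t).inter_right (isClosed_le continuous_const φ.continuous)
  have hKconv : Convex ℝ K :=
    (convex_closedBall p t).inter (convex_halfSpace_ge φ.toLinearMap.isLinear _)
  have hKne : p + t • u ∈ K := by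
    refine ⟨?_, by simp [hφu]⟩
    rw [mem_closedBall_iff_norm, add_sub_cancel_left, norm_smul, Real.norm_of_nonneg ht]
    exact mul_le_of_le_one_right ht hu
  have hfK : Set.MapsTo f K K := fun y ⟨hyp, hyφ⟩ => by
    refine ⟨?_, hyφ.trans (hφf y)⟩
    rw [mem_closedBall_iff_norm] at hyp ⊢
    calc ‖f y - p‖ = ‖f y - f p‖ := by rw [hp]
      _ ≤ t := (hf y p).trans hyp
  obtain ⟨y, ⟨hyp, hyφ⟩, hy⟩ := exists_isFixedPt_of_isCompact_of_convex hKc hKconv ⟨_, hKne⟩ hf hfK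
  refine ⟨y, hy, le_antisymm (mem_closedBall_iff_norm.1 hyp) ?_⟩
  refine le_of_mul_le_mul_left ?_ (norm_pos_iff.2 hφ)
  calc ‖φ‖ * t ≤ φ (y - p) := by rw [map_sub]; linarith [hyφ.out]
    _ ≤ ‖φ‖ * ‖y - p‖ := (le_abs_self _).trans (φ.le_opNorm _)

theorem not_isBounded_fixedPoints [ProperSpace V] {f : V → V}
    (hf : ∀ x y : V, ‖f x - f y‖ ≤ ‖x - y‖) {φ : V →L[ℝ] ℝ} (hφ : φ ≠ 0)
    (hφf : ∀ x, φ x ≤ φ (f x)) (hne : (fixedPoints f).Nonempty) :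
    ¬ IsBounded (fixedPoints f) := by
  intro hbdd
  obtain ⟨p, hp⟩ := hne
  obtain ⟨C, hC⟩ := Metric.isBounded_iff.1 hbdd
  obtain ⟨y, hy, hyp⟩ :=
    exists_isFixedPt_norm_sub_eq hf hφ hφf hp (t := max C 0 + 1) (by positivity)
  have := hC hy hp
  rw [dist_eq_norm, hyp] at this
  linarith [le_max_left C 0]

end

/-- For a nonexpansive map on a finite dimensional real normed space with a smooth norm,
the fixed point set is empty or unbounded iff there is a nonzero continuous linear
functional `φ` with `φ(f(x)) ≥ φ(x)` for all `x`. -/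
theorem stmt2 {V : Type*} [NormedAddCommGroup V] [NormedSpace ℝ V] [FiniteDimensional ℝ V]
    (hsmooth : ∀ z : V, ‖z‖ = 1 → ∃! φ : V →L[ℝ] ℝ, ‖φ‖ = 1 ∧ φ z = 1)
    (f : V → V) (hf : ∀ x y : V, ‖f x - f y‖ ≤ ‖x - y‖) :
    ({x : V | f x = x} = ∅ ∨ ¬ Bornology.IsBounded {x : V | f x = x}) ↔
      ∃ φ : V →L[ℝ] ℝ, φ ≠ 0 ∧ ∀ x : V, φ x ≤ φ (f x) := by
  constructor
  · rintro (hempty | hunb)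
    · obtain ⟨q, r, hr, hfq, hq⟩ := exists_seq_map_eq_smul_of_forall_not_isFixedPt hf
        (Set.eq_empty_iff_forall_notMem.1 hempty)
      exact exists_dual_le_apply_map_of_tendsto_norm hsmooth hf hr hfq hq
    · obtain ⟨q, hq_fix, hq⟩ := exists_seq_mem_tendsto_norm_atTop_of_not_isBounded hunb
      exact exists_dual_le_apply_map_of_tendsto_norm hsmooth hf (fun _ => le_rfl)
        (fun n => by rw [one_smul]; exact hq_fix n) hq
  · rintro ⟨φ, hφ, hφf⟩
    exact or_iff_not_imp_left.2 fun hne =>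
      not_isBounded_fixedPoints hf hφ hφf (Set.nonempty_iff_ne_empty.2 hne)
end

section
/- Let C be a closed, convex subset of a finite dimensional real normed space (V,‖·‖) and let f : C → C be nonexpansive. Suppose φ is a nonzero continuous linear functional on V such that (i) for every a ∈ ℝ the set {x ∈ C : φ(x) ≥ a} is nonempty, and (ii) φ(f(x)) ≥ φ(x) for all x ∈ C. Then the fixed point set Fix(f) = {x ∈ C : f(x) = x} is empty or unbounded. -/
open Filter Topology

/-- A nonexpansive self-map of a nonempty compact convex set has a fixed point. -/
lemma aux_fixed_of_nonexpansive {V : Type*} [NormedAddCommGroup V] [NormedSpace ℝ V]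
    (A : Set V) (hA : IsCompact A) (hAconv : Convex ℝ A) (hAne : A.Nonempty)
    (f : V → V) (hfA : Set.MapsTo f A A)
    (hf : ∀ x ∈ A, ∀ y ∈ A, ‖f x - f y‖ ≤ ‖x - y‖) :
    ∃ x ∈ A, f x = x := by
  obtain ⟨z, hz⟩ := hAne
  obtain ⟨M, hM⟩ := isBounded_iff_forall_norm_le.mp hA.isBounded
  haveI : CompactSpace A := isCompact_iff_compactSpace.mp hA
  haveI : Nonempty A := ⟨⟨z, hz⟩⟩
  -- approximate fixed points
  have key : ∀ n : ℕ, ∃ x ∈ A, ‖x - f x‖ ≤ (1 / (n + 2)) * (2 * M) := by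
    intro n
    set ε : ℝ := 1 / (n + 2) with hε
    have hε0 : 0 < ε := by positivity
    have hε1 : ε < 1 := by
      rw [hε, div_lt_one (by positivity)]
      have : (0:ℝ) ≤ n := Nat.cast_nonneg n
      linarith
    have hmem : ∀ x : A, (1 - ε) • f x + ε • z ∈ A := fun x =>
      hAconv (hfA x.2) hz (by linarith) hε0.le (by ring)
    set g : A → A := fun x => ⟨(1 - ε) • f x + ε • z, hmem x⟩ with hg
    have hK1 : (1 - ε).toNNReal < 1 := by
      rw [← Real.toNNReal_one, Real.toNNReal_lt_toNNReal_iff one_pos]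
      linarith
    have hlip : LipschitzWith (1 - ε).toNNReal g := by
      refine LipschitzWith.of_dist_le_mul fun x y => ?_
      have : dist (g x) (g y) = ‖(1 - ε) • (f x - f y)‖ := by
        rw [Subtype.dist_eq, dist_eq_norm, hg]
        congr 1
        simp [smul_sub]
      rw [this, norm_smul, Real.norm_eq_abs, abs_of_nonneg (by linarith : (0:ℝ) ≤ 1 - ε)]
      rw [Real.coe_toNNReal _ (by linarith : (0:ℝ) ≤ 1 - ε), Subtype.dist_eq, dist_eq_norm]
      exact mul_le_mul_of_nonneg_left (hf _ x.2 _ y.2) (by linarith)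
    have hcontr : ContractingWith (1 - ε).toNNReal g := ⟨hK1, hlip⟩
    set x := ContractingWith.fixedPoint g hcontr with hx
    have hfix : g x = x := hcontr.fixedPoint_isFixedPt
    refine ⟨(x : V), x.2, ?_⟩
    have hxv : (1 - ε) • f (x : V) + ε • z = (x : V) := congrArg Subtype.val hfix
    have : (x : V) - f (x : V) = ε • (z - f (x : V)) := by
      nth_rewrite 1 [← hxv]
      module
    rw [this, norm_smul, Real.norm_eq_abs, abs_of_pos hε0]
    refine mul_le_mul_of_nonneg_left ?_ hε0.le
    calc ‖z - f (x:V)‖ ≤ ‖z‖ + ‖f (x:V)‖ := norm_sub_le _ _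
      _ ≤ M + M := add_le_add (hM z hz) (hM _ (hfA x.2))
      _ = 2 * M := by ring
  choose u hu hufu using key
  obtain ⟨y, hyA, s, hs, hus⟩ := hA.tendsto_subseq hu
  refine ⟨y, hyA, ?_⟩
  have hdiff : Tendsto (fun k => u (s k) - y) atTop (𝓝 0) := by
    simpa using hus.sub (tendsto_const_nhds (x := y))
  have hdn : Tendsto (fun k => ‖u (s k) - y‖) atTop (𝓝 0) := by
    simpa using hdiff.norm
  have hfconv : Tendsto (fun k => f (u (s k))) atTop (𝓝 (f y)) := by
    rw [tendsto_iff_norm_sub_tendsto_zero]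
    exact squeeze_zero (fun k => norm_nonneg _) (fun k => hf _ (hu (s k)) _ hyA) hdn
  have hb : Tendsto (fun k : ℕ => (1 / ((s k : ℝ) + 2)) * (2 * M)) atTop (𝓝 0) := by
    have h1 : Tendsto (fun k => ((s k : ℝ) + 2)) atTop atTop :=
      tendsto_atTop_add_const_right _ _ (tendsto_natCast_atTop_atTop.comp hs.tendsto_atTop)
    have := h1.inv_tendsto_atTop.mul_const (2 * M)
    simpa [one_div] using this
  have happrox : Tendsto (fun k => u (s k) - f (u (s k))) atTop (𝓝 0) :=
    tendsto_zero_iff_norm_tendsto_zero.mpr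
      (squeeze_zero (fun k => norm_nonneg _) (fun k => hufu (s k)) hb)
  have : Tendsto (fun k => u (s k) - f (u (s k))) atTop (𝓝 (y - f y)) := hus.sub hfconv
  have heq : y - f y = 0 := tendsto_nhds_unique this happrox
  have := sub_eq_zero.mp heq
  exact this.symm


/-- If `f : C → C` is nonexpansive on a closed convex subset `C` of a finite dimensional
real normed space and there is a nonzero continuous linear functional `φ` which is
unbounded above on `C` and satisfies `φ(f(x)) ≥ φ(x)` on `C`, then the fixed point set of
`f` is empty or unbounded. -/
theorem stmt3 {V : Type*} [NormedAddCommGroup V] [NormedSpace ℝ V] [FiniteDimensional ℝ V]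
    (C : Set V) (hCcl : IsClosed C) (hCconv : Convex ℝ C)
    (f : V → V) (hfC : Set.MapsTo f C C)
    (hf : ∀ x ∈ C, ∀ y ∈ C, ‖f x - f y‖ ≤ ‖x - y‖)
    (φ : V →L[ℝ] ℝ) (hφ : φ ≠ 0)
    (h1 : ∀ a : ℝ, ∃ x ∈ C, a ≤ φ x)
    (h2 : ∀ x ∈ C, φ x ≤ φ (f x)) :
    {x ∈ C | f x = x} = ∅ ∨ ¬ Bornology.IsBounded {x ∈ C | f x = x} := by
  by_cases hne : {x ∈ C | f x = x} = ∅
  · exact Or.inl hne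
  right
  intro hbdd
  obtain ⟨p, hpC, hpf⟩ := Set.nonempty_iff_ne_empty.2 hne
  obtain ⟨R, hR⟩ := isBounded_iff_forall_norm_le.mp hbdd
  obtain ⟨x₀, hx₀C, hx₀⟩ := h1 (‖φ‖ * R + 1)
  set r := ‖x₀ - p‖ with hr
  set K := C ∩ Metric.closedBall p r with hKdef
  have hKc : IsCompact K := by
    refine Metric.isCompact_of_isClosed_isBounded (hCcl.inter Metric.isClosed_closedBall) ?_
    exact Metric.isBounded_closedBall.subset Set.inter_subset_right
  have hKconv : Convex ℝ K := hCconv.inter (convex_closedBall p r)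
  have hx₀K : x₀ ∈ K := ⟨hx₀C, by simp [Metric.mem_closedBall, dist_eq_norm, hr]⟩
  have hpK : p ∈ K := ⟨hpC, Metric.mem_closedBall_self (norm_nonneg _)⟩
  have hfK : Set.MapsTo f K K := by
    rintro x ⟨hxC, hxB⟩
    refine ⟨hfC hxC, ?_⟩
    rw [Metric.mem_closedBall, dist_eq_norm] at hxB ⊢
    calc ‖f x - p‖ = ‖f x - f p‖ := by rw [hpf]
      _ ≤ ‖x - p‖ := hf x hxC p hpC
      _ ≤ r := hxB
  obtain ⟨z, hzK, hzmax⟩ := hKc.exists_isMaxOn ⟨x₀, hx₀K⟩ φ.continuous.continuousOn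
  set A := {x ∈ K | φ x = φ z} with hAdef
  have hAeq : A = K ∩ φ ⁻¹' {φ z} := by ext x; simp [hAdef]
  have hAc : IsCompact A := by
    rw [hAeq]; exact hKc.inter_right (isClosed_singleton.preimage φ.continuous)
  have hAconv : Convex ℝ A := by
    rw [hAeq]
    exact hKconv.inter ((convex_singleton (φ z)).linear_preimage (φ : V →ₗ[ℝ] ℝ))
  have hfA : Set.MapsTo f A A := by
    rintro x ⟨hxK, hxφ⟩
    have hfxK := hfK hxK
    refine ⟨hfxK, le_antisymm (hzmax hfxK) ?_⟩
    rw [← hxφ]; exact h2 x hxK.1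
  obtain ⟨y, hyA, hyfix⟩ := aux_fixed_of_nonexpansive A hAc hAconv ⟨z, hzK, rfl⟩ f hfA
    (fun x hx y hy => hf x hx.1.1 y hy.1.1)
  have hyFix : y ∈ {x ∈ C | f x = x} := ⟨hyA.1.1, hyfix⟩
  have hyR : ‖y‖ ≤ R := hR y hyFix
  have h3 : φ y ≤ ‖φ‖ * R := by
    calc φ y ≤ |φ y| := le_abs_self _
      _ ≤ ‖φ‖ * ‖y‖ := φ.le_opNorm y
      _ ≤ ‖φ‖ * R := mul_le_mul_of_nonneg_left hyR (norm_nonneg φ)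
  have h4 : ‖φ‖ * R + 1 ≤ φ y := by
    rw [hyA.2]; exact le_trans hx₀ (hzmax hx₀K)
  linarith
end

section
/- Let D be an open subset of a finite dimensional real normed space (V,‖·‖) and let f : D → V be nonexpansive. If the fixed point set Fix(f) = {x ∈ D : f(x) = x} is compact and nonempty, then Fix(f) is connected. -/
/-!
Suppose `Fix f` splits into two disjoint nonempty closed pieces and let `a`, `b` be a closest
pair with `a` in one piece and `b` in the other. For `δ > 0` small, the lens
`closedBall a δ ∩ closedBall b (‖a - b‖ - δ)` lies in `D`; it is compact, convex, nonempty,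
and mapped into itself by `f` because `a` and `b` are fixed. A nonexpansive self-map of a
compact convex set has a fixed point (the contractions `x ↦ x₀ + c • (f x - x₀)`, `c ↑ 1`,
give approximate fixed points), and a fixed point in the lens is strictly closer than `‖a - b‖`
to both `a` and `b`, contradicting the choice of the pair.
-/

open Metric Set AffineMap

theorem IsCompact.isPreconnected_of_exists_dist_lt {X : Type*} [MetricSpace X] {S : Set X}
    (hS : IsCompact S)
    (h : ∀ a ∈ S, ∀ b ∈ S, a ≠ b → ∃ z ∈ S, dist a z < dist a b ∧ dist z b < dist a b) :
    IsPreconnected S := by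
  rw [isPreconnected_iff_subset_of_fully_disjoint_closed hS.isClosed]
  intro u v hu hv hSuv huv
  by_contra! hsplit
  obtain ⟨⟨x, hxS, hxu⟩, ⟨y, hyS, hyv⟩⟩ := And.imp not_subset.1 not_subset.1 hsplit
  have hA : (S ∩ u).Nonempty := ⟨y, hyS, (hSuv hyS).resolve_right hyv⟩
  have hB : (S ∩ v).Nonempty := ⟨x, hxS, (hSuv hxS).resolve_left hxu⟩
  obtain ⟨⟨a, b⟩, ⟨⟨haS, hau⟩, ⟨hbS, hbv⟩⟩, hmin⟩ :=
    ((hS.inter_right hu).prod (hS.inter_right hv)).exists_isMinOn (hA.prod hB)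
      (continuous_fst.dist continuous_snd).continuousOn
  have hab : a ≠ b := fun hab => disjoint_left.1 huv hau (hab ▸ hbv)
  obtain ⟨z, hzS, hza, hzb⟩ := h a haS b hbS hab
  rcases hSuv hzS with hzu | hzv
  · exact (hmin (mk_mem_prod ⟨hzS, hzu⟩ ⟨hbS, hbv⟩)).not_gt hzb
  · exact (hmin (mk_mem_prod ⟨haS, hau⟩ ⟨hzS, hzv⟩)).not_gt hza

section Nonexpansive

variable {V : Type*} [NormedAddCommGroup V] [NormedSpace ℝ V]

theorem lipschitzWith_homothety (x₀ : V) (c : ℝ) :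
    LipschitzWith ‖c‖₊ (homothety x₀ c) :=
  LipschitzWith.of_dist_le_mul fun x y => by
    simp [homothety_apply, dist_eq_norm, ← smul_sub, norm_smul]

theorem Convex.exists_fixedPoint_homothety_comp {C : Set V} (hconv : Convex ℝ C)
    (hcomp : IsComplete C) {x₀ : V} (hx₀ : x₀ ∈ C) {f : V → V} (hmaps : MapsTo f C C)
    (hf : LipschitzOnWith 1 f C) {c : ℝ} (hc₀ : 0 ≤ c) (hc₁ : c < 1) :
    ∃ w ∈ C, homothety x₀ c (f w) = w := by
  have hmaps' : MapsTo (homothety x₀ c ∘ f) C C := fun x hx => by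
    rw [Function.comp_apply, homothety_eq_lineMap]
    exact hconv.lineMap_mem hx₀ (hmaps hx) ⟨hc₀, hc₁.le⟩
  have hlip : LipschitzOnWith ‖c‖₊ (homothety x₀ c ∘ f) C := by
    simpa using (lipschitzWith_homothety x₀ c).comp_lipschitzOnWith hf
  have hcontr : ContractingWith ‖c‖₊ (hmaps'.restrict _ C C) :=
    ⟨by rw [← NNReal.coe_lt_coe]; simpa [abs_of_nonneg hc₀], hlip.mapsToRestrict hmaps'⟩
  obtain ⟨w, hwC, hw, -⟩ := hcontr.exists_fixedPoint' hcomp hmaps' hx₀ (edist_ne_top _ _)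
  exact ⟨w, hwC, hw⟩

theorem Convex.exists_dist_apply_lt_of_lipschitzOnWith_one {C : Set V} (hconv : Convex ℝ C)
    (hcomp : IsComplete C) (hbdd : Bornology.IsBounded C) (hne : C.Nonempty) {f : V → V}
    (hmaps : MapsTo f C C) (hf : LipschitzOnWith 1 f C) {ε : ℝ} (hε : 0 < ε) :
    ∃ w ∈ C, dist w (f w) < ε := by
  obtain ⟨x₀, hx₀⟩ := hne
  obtain ⟨r, hr⟩ := hbdd.subset_closedBall x₀
  have hr₀ : 0 ≤ r := by simpa using hr hx₀
  -- the homothety ratio `c` makes `(1 - c) * r = ε * r / (ε + r) < ε`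
  set c := r / (ε + r)
  have hc₀ : 0 ≤ c := by positivity
  have hc₁ : c < 1 := (div_lt_one (by positivity)).2 (by linarith)
  obtain ⟨w, hwC, hw⟩ := hconv.exists_fixedPoint_homothety_comp hcomp hx₀ hmaps hf hc₀ hc₁
  refine ⟨w, hwC, ?_⟩
  have h1c : 1 - c = ε / (ε + r) := by
    rw [eq_div_iff (by positivity), sub_mul, div_mul_cancel₀ _ (by positivity)]
    ring
  calc dist w (f w) = dist (homothety x₀ c (f w)) (f w) := by rw [hw]
    _ = (1 - c) * dist x₀ (f w) := by
        rw [dist_homothety_self, Real.norm_of_nonneg (by linarith)]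
    _ ≤ (1 - c) * r := by
        gcongr
        exact dist_comm x₀ (f w) ▸ hr (hmaps hwC)
    _ = ε * (r / (ε + r)) := by rw [h1c]; ring
    _ < ε * 1 := by gcongr
    _ = ε := mul_one ε

theorem IsCompact.exists_fixedPoint_of_lipschitzOnWith_one {C : Set V} (hC : IsCompact C)
    (hconv : Convex ℝ C) (hne : C.Nonempty) {f : V → V} (hmaps : MapsTo f C C)
    (hf : LipschitzOnWith 1 f C) : ∃ z ∈ C, f z = z := by
  obtain ⟨z, hzC, hzmin⟩ :=
    hC.exists_isMinOn hne
      (continuous_dist.comp_continuousOn (continuousOn_id.prodMk hf.continuousOn))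
  refine ⟨z, hzC, ?_⟩
  by_contra hfz
  obtain ⟨w, hwC, hw⟩ := hconv.exists_dist_apply_lt_of_lipschitzOnWith_one hC.isComplete
    hC.isBounded hne hmaps hf (dist_pos.2 (Ne.symm hfz))
  exact (hzmin hwC).not_gt hw

theorem closedBall_inter_closedBall_sub_nonempty (a b : V) {δ : ℝ} (hδ₀ : 0 ≤ δ)
    (hδ : δ ≤ dist a b) : (closedBall a δ ∩ closedBall b (dist a b - δ)).Nonempty := by
  rcases eq_or_ne a b with rfl | hab
  · obtain rfl : δ = 0 := by simp at hδ; linarith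
    simp
  have hd : 0 < dist a b := dist_pos.2 hab
  refine ⟨lineMap a b (δ / dist a b), ?_, ?_⟩
  · rw [mem_closedBall, dist_lineMap_left, Real.norm_of_nonneg (by positivity),
      div_mul_cancel₀ _ hd.ne']
  · rw [mem_closedBall, dist_lineMap_right, Real.norm_of_nonneg, sub_mul, one_mul,
      div_mul_cancel₀ _ hd.ne']
    rwa [sub_nonneg, div_le_one hd]

theorem exists_fixedPoint_mem_closedBall_inter_closedBall [ProperSpace V] {D : Set V}
    {f : V → V} (hf : LipschitzOnWith 1 f D) {a b : V} (hfa : f a = a) (hbD : b ∈ D)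
    (hfb : f b = b) {δ : ℝ} (hδ₀ : 0 ≤ δ) (hδ : δ ≤ dist a b) (hball : closedBall a δ ⊆ D) :
    ∃ z ∈ closedBall a δ ∩ closedBall b (dist a b - δ), f z = z := by
  set C := closedBall a δ ∩ closedBall b (dist a b - δ)
  have hCD : C ⊆ D := inter_subset_left.trans hball
  have haD : a ∈ D := hball (mem_closedBall_self hδ₀)
  have hfix : ∀ p ∈ D, f p = p → ∀ x ∈ D, dist (f x) p ≤ dist x p := fun p hp hfp x hx => by
    simpa [hfp] using hf.dist_le_mul x hx p hp
  have hmaps : MapsTo f C C := fun x hx =>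
    ⟨(hfix a haD hfa x (hCD hx)).trans hx.1, (hfix b hbD hfb x (hCD hx)).trans hx.2⟩
  have hC : IsCompact C := (isCompact_closedBall a δ).inter_right isClosed_closedBall
  exact hC.exists_fixedPoint_of_lipschitzOnWith_one
    ((convex_closedBall a δ).inter (convex_closedBall b _))
    (closedBall_inter_closedBall_sub_nonempty a b hδ₀ hδ) hmaps (hf.mono hCD)

end Nonexpansive

/-- If `f : D → V` is a nonexpansive map on an open subset `D` of a finite dimensional
real normed space and its fixed point set is compact and nonempty, then the fixed point
set is connected. -/
theorem stmt4 {V : Type*} [NormedAddCommGroup V] [NormedSpace ℝ V] [FiniteDimensional ℝ V]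
    (D : Set V) (hD : IsOpen D) (f : V → V)
    (hf : ∀ x ∈ D, ∀ y ∈ D, ‖f x - f y‖ ≤ ‖x - y‖)
    (hcpt : IsCompact {x ∈ D | f x = x}) (hne : {x ∈ D | f x = x}.Nonempty) :
    IsConnected {x ∈ D | f x = x} := by
  have hlip : LipschitzOnWith 1 f D := LipschitzOnWith.of_dist_le_mul fun x hx y hy => by
    simpa [dist_eq_norm] using hf x hx y hy
  refine ⟨hne, hcpt.isPreconnected_of_exists_dist_lt ?_⟩
  rintro a ⟨haD, hfa⟩ b ⟨hbD, hfb⟩ hab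
  obtain ⟨ε, hε, hεD⟩ := Metric.isOpen_iff.1 hD a haD
  have hd : 0 < dist a b := dist_pos.2 hab
  set δ := min (ε / 2) (dist a b / 2)
  have hδ₀ : 0 < δ := by positivity
  have hδd : δ < dist a b := (min_le_right _ _).trans_lt (half_lt_self hd)
  have hball : closedBall a δ ⊆ D :=
    (closedBall_subset_ball ((min_le_left _ _).trans_lt (half_lt_self hε))).trans hεD
  obtain ⟨z, ⟨hza, hzb⟩, hfz⟩ :=
    exists_fixedPoint_mem_closedBall_inter_closedBall hlip hfa hbD hfb hδ₀.le hδd.le hball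
  refine ⟨z, ⟨hball hza, hfz⟩, ?_, ?_⟩
  · rw [dist_comm]; exact (mem_closedBall.1 hza).trans_lt hδd
  · linarith [mem_closedBall.1 hzb]
end

section
/- Let D be an open subset of a finite dimensional real normed space (V,‖·‖) and let f : D → V be nonexpansive with Fix(f) = {x ∈ D : f(x) = x} compact and nonempty. If G is a bounded open set with closure(G) ⊆ D and Fix(f) ⊆ G, then for every y ∈ V with y ≠ 0 there exist w in the boundary of G and λ > 0 such that w − f(w) = λ y. -/
/-!
For `l > 1` the map `v ↦ l • v - f v` is `l • id` perturbed by a `1`-Lipschitz map, hence locally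
onto with explicit balls. Push the ray `l • x₀ - f x₀ + t • y`, `t ≥ 0`, through the compact image
of `closure G` as far as it goes: the last point comes from some `w ∈ closure G`, and `w` cannot be
interior, since then local surjectivity would let the ray go further. For a fixed point `x₀` this
gives `w ∈ ∂G` with `w - f w - t • y = (l - 1) • (x₀ - w)`, so `w - f w` lies within
`(l - 1) * diam G` of the ray `ℝ≥0 • y`; letting `l → 1`, compactness of `∂G` yields a boundary
point with `w - f w ∈ ℝ≥0 • y`, and `w - f w ≠ 0` because all fixed points lie in the open set `G`.
-/

open Metric Set

theorem IsCompact.exists_mem_of_forall_infDist_le {X E : Type*} [TopologicalSpace X]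
    [PseudoMetricSpace E] {K : Set X} (hK : IsCompact K) {φ : X → E} (hφ : ContinuousOn φ K)
    {C : Set E} (hC : IsClosed C) (hCne : C.Nonempty)
    (h : ∀ ε > 0, ∃ x ∈ K, infDist (φ x) C ≤ ε) : ∃ x ∈ K, φ x ∈ C := by
  obtain ⟨x₁, hx₁, -⟩ := h 1 one_pos
  obtain ⟨x, hx, hmin⟩ :=
    hK.exists_isMinOn ⟨x₁, hx₁⟩ ((continuous_infDist_pt C).comp_continuousOn hφ)
  refine ⟨x, hx, (hC.mem_iff_infDist_zero hCne).2 (le_antisymm ?_ infDist_nonneg)⟩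
  refine le_of_forall_pos_le_add fun ε hε => ?_
  obtain ⟨x', hx', hx'ε⟩ := h ε hε
  simpa using (hmin hx').trans hx'ε

section

variable {V : Type*} [NormedAddCommGroup V] [NormedSpace ℝ V]

theorem IsCompact.exists_last_add_smul_mem {A : Set V} (hA : IsCompact A) {a y : V} (ha : a ∈ A)
    (hy : y ≠ 0) : ∃ t : ℝ, 0 ≤ t ∧ a + t • y ∈ A ∧ ∀ s, t < s → a + s • y ∉ A := by
  have hS : IsCompact ((fun t : ℝ => a + t • y) ⁻¹' A) :=
    ((Homeomorph.addLeft a).isClosedEmbedding.comp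
      (isClosedEmbedding_smul_left hy)).isCompact_preimage hA
  obtain ⟨t, ht, hmax⟩ := hS.exists_isGreatest ⟨(0 : ℝ), by simpa using ha⟩
  exact ⟨t, hmax (by simpa using ha), ht, fun s hts hs => (hmax hs).not_gt hts⟩

theorem surjOn_closedBall_smul_sub [CompleteSpace V] {f : V → V} {l : ℝ} (hl : 1 < l)
    {x : V} {r : ℝ} (hr : 0 ≤ r) (hf : LipschitzOnWith 1 f (closedBall x r)) :
    SurjOn (fun v => l • v - f v) (closedBall x r)
      (closedBall (l • x - f x) ((l - 1) * r)) := by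
  have hl0 : 0 < l := by linarith
  let inv : (l • ContinuousLinearMap.id ℝ V).NonlinearRightInverse :=
    { toFun := fun v => l⁻¹ • v
      nnnorm := l⁻¹.toNNReal
      bound' := fun v => by simp [norm_smul, abs_of_pos hl0, hl0.le]
      right_inv' := fun v => by simp [smul_smul, hl0.ne'] }
  have hsub : (fun v => l • v - f v) - ⇑(l • ContinuousLinearMap.id ℝ V) = -f := by
    ext v
    simp
  have happrox : ApproximatesLinearOn (fun v => l • v - f v) (l • ContinuousLinearMap.id ℝ V)
      (closedBall x r) 1 :=
    (hsub ▸ hf.neg).approximatesLinearOn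
  simpa [inv, hl0.le] using happrox.surjOn_closedBall_of_nonlinearRightInverse inv hr subset_rfl

variable [CompleteSpace V] {G : Set V} {f : V → V}

theorem exists_mem_frontier_smul_sub_eq_add_smul (hGc : IsCompact (closure G))
    (hf : LipschitzOnWith 1 f (closure G)) {l : ℝ} (hl : 1 < l) {x₀ : V} (hx₀ : x₀ ∈ closure G)
    {y : V} (hy : y ≠ 0) :
    ∃ w ∈ frontier G, ∃ t : ℝ, 0 ≤ t ∧ l • w - f w = l • x₀ - f x₀ + t • y := by
  set F : V → V := fun v => l • v - f v
  have hFc : IsCompact (F '' closure G) :=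
    hGc.image_of_continuousOn ((continuousOn_const.smul continuousOn_id).sub hf.continuousOn)
  obtain ⟨t, ht, ⟨w, hwG, hw⟩, hlast⟩ :=
    hFc.exists_last_add_smul_mem (mem_image_of_mem F hx₀) hy
  refine ⟨w, ⟨hwG, fun hw' => ?_⟩, t, ht, hw⟩
  obtain ⟨r, hr, hball⟩ := nhds_basis_closedBall.mem_iff.1 (mem_interior_iff_mem_nhds.1 hw')
  have hy' : 0 < ‖y‖ := norm_pos_iff.2 hy
  set s := t + (l - 1) * r / ‖y‖
  have hs : F x₀ + s • y ∈ closedBall (F w) ((l - 1) * r) := by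
    rw [mem_closedBall, dist_eq_norm, hw, add_sub_add_left_eq_sub, ← sub_smul,
      add_sub_cancel_left, norm_smul, Real.norm_of_nonneg (by positivity),
      div_mul_cancel₀ _ hy'.ne']
  obtain ⟨v, hv, hFv⟩ :=
    surjOn_closedBall_smul_sub hl hr.le (hf.mono (hball.trans subset_closure)) hs
  exact hlast s (lt_add_of_pos_right t (by have := sub_pos.2 hl; positivity))
    ⟨v, subset_closure (hball hv), hFv⟩

theorem exists_mem_frontier_infDist_sub_le (hGc : IsCompact (closure G))
    (hf : LipschitzOnWith 1 f (closure G)) {x₀ : V} (hx₀ : x₀ ∈ closure G) (hfx₀ : f x₀ = x₀)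
    {y : V} (hy : y ≠ 0) {ε : ℝ} (hε : 0 < ε) :
    ∃ w ∈ frontier G, infDist (w - f w) ((· • y) '' Ici (0 : ℝ)) ≤ ε := by
  set d := diam (closure G)
  have hd : 0 ≤ d := diam_nonneg
  set l := 1 + ε / (d + 1)
  have hl : 1 < l := lt_add_of_pos_right 1 (by positivity)
  obtain ⟨w, hw, t, ht, hwt⟩ := exists_mem_frontier_smul_sub_eq_add_smul hGc hf hl hx₀ hy
  have hdiff : w - f w - t • y = (l - 1) • (x₀ - w) := by
    rw [hfx₀] at hwt
    linear_combination (norm := module) hwt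
  refine ⟨w, hw, (infDist_le_dist_of_mem (mem_image_of_mem _ (mem_Ici.2 ht))).trans ?_⟩
  calc dist (w - f w) (t • y) = ε / (d + 1) * dist x₀ w := by
        rw [dist_eq_norm, hdiff, norm_smul, Real.norm_of_nonneg (sub_pos.2 hl).le, dist_eq_norm]
        simp [l]
    _ ≤ ε / (d + 1) * d := by
        gcongr
        exact dist_le_diam_of_mem hGc.isBounded hx₀ (frontier_subset_closure hw)
    _ ≤ ε := by
        rw [div_mul_eq_mul_div, div_le_iff₀ (by positivity)]
        nlinarith

theorem exists_mem_frontier_sub_eq_smul (hGc : IsCompact (closure G))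
    (hf : LipschitzOnWith 1 f (closure G)) {x₀ : V} (hx₀ : x₀ ∈ closure G) (hfx₀ : f x₀ = x₀)
    {y : V} (hy : y ≠ 0) : ∃ w ∈ frontier G, ∃ t : ℝ, 0 ≤ t ∧ w - f w = t • y := by
  have hray : IsClosed ((· • y) '' Ici (0 : ℝ)) :=
    (isClosedEmbedding_smul_left hy).isClosedMap _ isClosed_Ici
  have hfrc : IsCompact (frontier G) :=
    hGc.of_isClosed_subset isClosed_frontier frontier_subset_closure
  obtain ⟨w, hw, t, ht, hwt⟩ :=
    hfrc.exists_mem_of_forall_infDist_le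
      ((continuousOn_id.sub hf.continuousOn).mono frontier_subset_closure) hray
      ⟨0, 0, mem_Ici.2 le_rfl, zero_smul _ _⟩
      fun _ hε => exists_mem_frontier_infDist_sub_le hGc hf hx₀ hfx₀ hy hε
  exact ⟨w, hw, t, ht, hwt.symm⟩

end

theorem stmt5_general {V : Type*} [NormedAddCommGroup V] [NormedSpace ℝ V] [FiniteDimensional ℝ V]
    (D : Set V) (f : V → V)
    (hf : ∀ x ∈ D, ∀ y ∈ D, ‖f x - f y‖ ≤ ‖x - y‖)
    (hne : {x ∈ D | f x = x}.Nonempty)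
    (G : Set V) (hGopen : IsOpen G) (hGbdd : Bornology.IsBounded G)
    (hGD : closure G ⊆ D) (hFixG : {x ∈ D | f x = x} ⊆ G) :
    ∀ y : V, y ≠ 0 → ∃ w ∈ frontier G, ∃ l : ℝ, 0 < l ∧ w - f w = l • y := by
  intro y hy
  have := FiniteDimensional.complete ℝ V
  obtain ⟨x₀, hx₀D, hx₀⟩ := hne
  have hfG : LipschitzOnWith 1 f (closure G) :=
    lipschitzOnWith_iff_norm_sub_le.2 fun a ha b hb => by simpa using hf a (hGD ha) b (hGD hb)
  obtain ⟨w, hw, t, ht, hwt⟩ := exists_mem_frontier_sub_eq_smul hGbdd.isCompact_closure hfG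
    (subset_closure (hFixG ⟨hx₀D, hx₀⟩)) hx₀ hy
  refine ⟨w, hw, t, ht.lt_of_ne ?_, hwt⟩
  rintro rfl
  have hfw : f w = w := (sub_eq_zero.1 (hwt.trans (zero_smul ℝ y))).symm
  exact (hGopen.frontier_eq ▸ hw).2 (hFixG ⟨hGD (frontier_subset_closure hw), hfw⟩)

/-- If `f : D → V` is nonexpansive with compact nonempty fixed point set, and `G` is a
bounded open set with `closure G ⊆ D` and `Fix(f) ⊆ G`, then every direction `y ≠ 0` is
realized as `w - f(w) = λ y` for some `w ∈ ∂G` and `λ > 0`. -/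
theorem stmt5 {V : Type*} [NormedAddCommGroup V] [NormedSpace ℝ V] [FiniteDimensional ℝ V]
    (D : Set V) (hD : IsOpen D) (f : V → V)
    (hf : ∀ x ∈ D, ∀ y ∈ D, ‖f x - f y‖ ≤ ‖x - y‖)
    (hcpt : IsCompact {x ∈ D | f x = x}) (hne : {x ∈ D | f x = x}.Nonempty)
    (G : Set V) (hGopen : IsOpen G) (hGbdd : Bornology.IsBounded G)
    (hGD : closure G ⊆ D) (hFixG : {x ∈ D | f x = x} ⊆ G) :
    ∀ y : V, y ≠ 0 → ∃ w ∈ frontier G, ∃ l : ℝ, 0 < l ∧ w - f w = l • y :=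
  stmt5_general D f hf hne G hGopen hGbdd hGD hFixG
end

section
/- Let f : V → V be a nonexpansive map on a finite dimensional real normed space (V,‖·‖) with closed unit ball B₁. Then the following are equivalent: (1) the fixed point set Fix(f) = {x ∈ V : f(x) = x} is nonempty and bounded; (2) for every y ∈ V with y ≠ 0 there exist w ∈ V and λ > 0 such that w − f(w) = λ y; (3) there exist finitely many points w₁, …, w_m ∈ V such that the set {f(w_i) − w_i : i = 1, …, m} illuminates B₁. -/
/-- A set `S` illuminates a set `K` if every point of the boundary of `K` can be moved
into the interior of `K` by adding a positive multiple of some element of `S`. -/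
def Illuminates {V : Type*} [NormedAddCommGroup V] [NormedSpace ℝ V]
    (S K : Set V) : Prop :=
  ∀ x ∈ frontier K, ∃ v ∈ S, ∃ l : ℝ, 0 < l ∧ x + l • v ∈ interior K

/-!
Everything runs through `outwardPoints f`, the points `x` with `f x = c • x` for some `c ≥ 1`.
If this set is bounded, then the fixed points of the contractions `t • f` stay bounded as
`t → 1`, and their limit points are fixed points of `f`. If it is unbounded, let `u` be a limit
direction of its points `z`. A norming functional of `z - w` is nonnegative on `f w - w`
(nonexpansiveness together with `f z = c • z`, `c ≥ 1`), so `‖u + l • (f w - w)‖ ≥ 1`: no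
displacement illuminates the boundary point `u`. Hence (3) → (1).

For (1) → (2), let `x` be the fixed point of `t • f + l • y` with `t < 1`. It depends
continuously on `l`, lies inside a sphere enclosing `Fix f` at `l = 0` and outside it for large
`l`. So one of them lies on the sphere, and letting `t → 1` gives `x = f x + l • y` with `‖x‖`
too large for a fixed point, hence `l > 0`. Finally (2) → (3) is compactness of the unit sphere.
-/

open Metric Filter Topology Set NormedSpace

section Nonexpansive

variable {V : Type*} [NormedAddCommGroup V] [NormedSpace ℝ V] {f : V → V}

lemma exists_eq_smul_add [CompleteSpace V] (hf : LipschitzWith 1 f) {t : ℝ} (ht₀ : 0 ≤ t)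
    (ht₁ : t < 1) (c : V) : ∃ x, x = t • f x + c := by
  have hK : t.toNNReal < 1 := by simpa using ht₁
  have hlip : LipschitzWith t.toNNReal fun x => t • f x + c :=
    LipschitzWith.of_dist_le' fun x y => by
      simpa [dist_eq_norm, ← smul_sub, norm_smul, abs_of_nonneg ht₀] using
        mul_le_mul_of_nonneg_left (by simpa using hf.norm_sub_le x y) ht₀
  obtain ⟨x, hx, -⟩ := ContractingWith.exists_fixedPoint ⟨hK, hlip⟩ 0 (edist_ne_top _ _)
  exact ⟨x, hx.symm⟩

lemma eq_add_of_tendsto {ι : Type*} {F : Filter ι} [F.NeBot] (hf : Continuous f)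
    {t : ι → ℝ} {x c : ι → V} {x₀ c₀ : V} (ht : Tendsto t F (𝓝 1))
    (hx : Tendsto x F (𝓝 x₀)) (hc : Tendsto c F (𝓝 c₀))
    (h : ∀ i, x i = t i • f (x i) + c i) : x₀ = f x₀ + c₀ := by
  have hlim := (ht.smul ((hf.tendsto x₀).comp hx)).add hc
  simpa using tendsto_nhds_unique (hx.congr h) hlim

section Resolvent

variable {t : ℝ} {x x' c c' : V}

lemma one_sub_mul_norm_sub_le (hf : LipschitzWith 1 f) (ht₀ : 0 ≤ t)
    (hx : x = t • f x + c) (hx' : x' = t • f x' + c') :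
    (1 - t) * ‖x - x'‖ ≤ ‖c - c'‖ := by
  have hsplit : x - x' = t • (f x - f x') + (c - c') := by
    rw [eq_sub_of_add_eq' hx.symm, eq_sub_of_add_eq' hx'.symm]; module
  have := calc ‖x - x'‖ ≤ ‖t • (f x - f x')‖ + ‖c - c'‖ := hsplit ▸ norm_add_le _ _
    _ ≤ t * ‖x - x'‖ + ‖c - c'‖ := by
      rw [norm_smul, Real.norm_of_nonneg ht₀]
      gcongr
      simpa using hf.norm_sub_le x x'
  linarith

lemma norm_sub_le_two_mul_norm_sub (hf : LipschitzWith 1 f) (ht₀ : 0 ≤ t) (ht₁ : t ≤ 1)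
    (hx : x = t • f x + c) (hx' : x' = t • f x' + c') :
    ‖c - c'‖ ≤ 2 * ‖x - x'‖ := by
  have hsplit : c - c' = (x - x') - t • (f x - f x') := by
    rw [eq_sub_of_add_eq' hx.symm, eq_sub_of_add_eq' hx'.symm]; module
  calc ‖c - c'‖ ≤ ‖x - x'‖ + t * ‖f x - f x'‖ := by
        rw [hsplit]
        exact (norm_sub_le _ _).trans_eq (by rw [norm_smul, Real.norm_of_nonneg ht₀])
    _ ≤ ‖x - x'‖ + 1 * ‖x - x'‖ := by
        gcongr
        simpa using hf.norm_sub_le x x'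
    _ = 2 * ‖x - x'‖ := by ring

end Resolvent

lemma exists_norm_eq_and_eq_smul_add_smul [CompleteSpace V] (hf : LipschitzWith 1 f) {z y : V}
    (hz : f z = z) (hy : y ≠ 0) {R : ℝ} (hR : 2 * ‖z‖ ≤ R) :
    ∃ L : ℝ, ∀ t : ℝ, 0 ≤ t → t < 1 → ∃ l ∈ Icc 0 L, ∃ x : V, ‖x‖ = R ∧ x = t • f x + l • y := by
  have hy' : 0 < ‖y‖ := norm_pos_iff.2 hy
  -- large enough that `‖L • y‖ ≤ 2 * ‖X L - z‖ + ‖z‖` forces `R ≤ ‖X L‖`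
  set L := (2 * R + 3 * ‖z‖) / ‖y‖
  have hL : 0 ≤ L := div_nonneg (by linarith [norm_nonneg z]) hy'.le
  refine ⟨L, fun t ht₀ ht₁ => ?_⟩
  choose X hX using fun l : ℝ => exists_eq_smul_add hf ht₀ ht₁ (l • y)
  have hz' : z = t • f z + (1 - t) • z := by rw [hz]; module
  have hX_cont : Continuous X := by
    refine (LipschitzWith.of_dist_le' (K := ‖y‖ / (1 - t)) fun l l' => ?_).continuous
    have := one_sub_mul_norm_sub_le hf ht₀ (hX l) (hX l')
    rw [← sub_smul, norm_smul, Real.norm_eq_abs] at this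
    rw [dist_eq_norm, Real.dist_eq, div_mul_eq_mul_div, le_div_iff₀ (by linarith)]
    linarith
  have hX₀ : ‖X 0‖ ≤ R := by
    have := one_sub_mul_norm_sub_le hf ht₀ (hX 0) hz'
    rw [zero_smul, zero_sub, norm_neg, norm_smul, Real.norm_of_nonneg (by linarith)] at this
    have := le_of_mul_le_mul_left this (by linarith)
    linarith [norm_le_norm_sub_add (X 0) z]
  have hX_L : R ≤ ‖X L‖ := by
    have := norm_sub_le_two_mul_norm_sub hf ht₀ ht₁.le (hX L) hz'
    have h₁ := norm_sub_norm_le (L • y) ((1 - t) • z)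
    rw [norm_smul, norm_smul, Real.norm_of_nonneg hL, Real.norm_of_nonneg (by linarith),
      div_mul_cancel₀ _ hy'.ne'] at h₁
    nlinarith [norm_sub_le (X L) z, norm_nonneg z]
  obtain ⟨l, hl, hlR⟩ := intermediate_value_Icc hL hX_cont.norm.continuousOn
    ⟨hX₀, hX_L⟩
  exact ⟨l, hl, X l, hlR, hX l⟩

lemma exists_sub_eq_smul_of_isBounded_fixedPoints [ProperSpace V] (hf : LipschitzWith 1 f)
    (hne : {x | f x = x}.Nonempty) (hb : Bornology.IsBounded {x | f x = x}) {y : V} (hy : y ≠ 0) :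
    ∃ (w : V) (l : ℝ), 0 < l ∧ w - f w = l • y := by
  obtain ⟨z, hz⟩ := hne
  obtain ⟨M, hM⟩ := isBounded_iff_forall_norm_le.1 hb
  set R := max M (2 * ‖z‖) + 1
  obtain ⟨L, hL⟩ := exists_norm_eq_and_eq_smul_add_smul hf hz hy (R := R) (by
    linarith [le_max_right M (2 * ‖z‖)])
  obtain ⟨t, -, ht, ht_lim⟩ := exists_seq_strictMono_tendsto' (zero_lt_one' ℝ)
  choose l hl x hxR hx using fun n => hL (t n) (ht n).1.le (ht n).2
  obtain ⟨⟨l₀, x₀⟩, ⟨hl₀, hx₀⟩, φ, hφ, hlim⟩ :=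
    (isCompact_Icc.prod (isCompact_sphere 0 R)).tendsto_subseq (x := fun n => (l n, x n))
      fun n => ⟨hl n, mem_sphere_zero_iff_norm.2 (hxR n)⟩
  have hl_lim : Tendsto (fun n => l (φ n)) atTop (𝓝 l₀) := hlim.fst_nhds
  have hx_lim : Tendsto (fun n => x (φ n)) atTop (𝓝 x₀) := hlim.snd_nhds
  have hfix := eq_add_of_tendsto hf.continuous (ht_lim.comp hφ.tendsto_atTop) hx_lim
    (hl_lim.smul_const y) fun n => hx (φ n)
  refine ⟨x₀, l₀, lt_of_le_of_ne hl₀.1 fun h => ?_, sub_eq_of_eq_add' hfix⟩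
  rw [← h, zero_smul, add_zero] at hfix
  linarith [hM x₀ hfix.symm, mem_sphere_zero_iff_norm.1 hx₀, le_max_left M (2 * ‖z‖)]

variable (f) in
def outwardPoints : Set V := {x | ∃ c : ℝ, 1 ≤ c ∧ f x = c • x}

lemma fixedPoints_nonempty_and_isBounded [ProperSpace V] (hf : LipschitzWith 1 f)
    (h : Bornology.IsBounded (outwardPoints f)) :
    {x | f x = x}.Nonempty ∧ Bornology.IsBounded {x | f x = x} := by
  refine ⟨?_, h.subset fun x hx => ⟨1, le_rfl, by rw [one_smul]; exact hx⟩⟩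
  obtain ⟨M, hM⟩ := isBounded_iff_forall_norm_le.1 h
  obtain ⟨t, -, ht, ht_lim⟩ := exists_seq_strictMono_tendsto' (zero_lt_one' ℝ)
  choose z hz using fun n => exists_eq_smul_add hf (ht n).1.le (ht n).2 0
  have hz_mem : ∀ n, z n ∈ closedBall 0 M := fun n => mem_closedBall_zero_iff.2 <| hM _
    ⟨(t n)⁻¹, (one_le_inv₀ (ht n).1).2 (ht n).2.le, by
      rw [eq_inv_smul_iff₀ (ht n).1.ne']; simpa using (hz n).symm⟩
  obtain ⟨x, -, φ, hφ, hlim⟩ := (isCompact_closedBall 0 M).tendsto_subseq hz_mem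
  exact ⟨x, by simpa using (eq_add_of_tendsto hf.continuous (ht_lim.comp hφ.tendsto_atTop) hlim
    tendsto_const_nhds fun n => hz (φ n)).symm⟩

lemma norm_mul_norm_normalize_sub_normalize_le (x y : V) :
    ‖x‖ * ‖normalize x - normalize y‖ ≤ 2 * ‖x - y‖ := by
  have hsplit : ‖x‖ • (normalize x - normalize y) = (x - y) + (‖y‖ - ‖x‖) • normalize y := by
    rw [smul_sub, norm_smul_normalize, sub_smul, norm_smul_normalize]; abel
  have hy : ‖normalize y‖ ≤ 1 := by
    by_cases h : y = 0
    · simp [h]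
    · exact (norm_normalize h).le
  calc ‖x‖ * ‖normalize x - normalize y‖ = ‖(x - y) + (‖y‖ - ‖x‖) • normalize y‖ := by
        rw [← hsplit, norm_smul, norm_norm]
    _ ≤ ‖x - y‖ + |‖y‖ - ‖x‖| * 1 := by
        refine (norm_add_le _ _).trans ?_
        rw [norm_smul, Real.norm_eq_abs]
        gcongr
    _ ≤ 2 * ‖x - y‖ := by
        linarith [abs_norm_sub_norm_le y x, norm_sub_rev y x]

lemma tendsto_normalize_sub {ι : Type*} {F : Filter ι} {x : ι → V} {u : V}
    (hx : Tendsto (fun i => ‖x i‖) F atTop) (hu : Tendsto (fun i => normalize (x i)) F (𝓝 u))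
    (w : V) : Tendsto (fun i => normalize (x i - w)) F (𝓝 u) := by
  have hdiff : Tendsto (fun i => normalize (x i - w) - normalize (x i)) F (𝓝 0) := by
    refine squeeze_zero_norm' ?_ ((tendsto_const_nhds (x := 2 * ‖w‖)).div_atTop hx)
    filter_upwards [hx.eventually_gt_atTop 0] with i hi
    rw [le_div_iff₀ hi, mul_comm, norm_sub_rev]
    simpa using norm_mul_norm_normalize_sub_normalize_le (x i) (x i - w)
  simpa using hdiff.add hu

/-- Witnessed by a norming functional of `z - w`: it is nonnegative on `f w - w` because `f` is
nonexpansive and pushes `z` outward. -/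
lemma one_sub_norm_sub_normalize_le_norm_add_smul (hf : LipschitzWith 1 f) {z w : V} {c : ℝ}
    (hz : f z = c • z) (hc : 1 ≤ c) (hw : ‖w‖ < ‖z - w‖) (u : V) {l : ℝ} (hl : 0 ≤ l) :
    1 - ‖u - normalize (z - w)‖ ≤ ‖u + l • (f w - w)‖ := by
  obtain ⟨g, hg, hgzw⟩ := exists_dual_vector ℝ (z - w) (by linarith [norm_nonneg w])
  rw [RCLike.ofReal_real_eq_id, id] at hgzw
  have hg_le : ∀ x, g x ≤ ‖x‖ := fun x =>
    (le_abs_self _).trans <| by simpa [hg] using g.le_opNorm x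
  have hgz : 0 ≤ g z := by
    have : g z = ‖z - w‖ + g w := by rw [← hgzw, ← map_add, sub_add_cancel]
    linarith [hg_le (-w), map_neg g w, norm_neg w]
  have hg_disp : 0 ≤ g (f w - w) := by
    have : f w - w = -(f z - f w) + (z - w) + (c - 1) • z := by rw [hz]; module
    rw [this, map_add, map_add, map_neg, map_smul, hgzw, smul_eq_mul]
    have := (hg_le (f z - f w)).trans (by simpa using hf.norm_sub_le z w)
    nlinarith [mul_nonneg (sub_nonneg.2 hc) hgz]
  have hg_u : 1 - ‖u - normalize (z - w)‖ ≤ g u := by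
    have h₁ : g (normalize (z - w)) = 1 := by
      rw [NormedSpace.normalize, map_smul, hgzw, smul_eq_mul,
        inv_mul_cancel₀ (by linarith [norm_nonneg w])]
    have h₂ := hg_le (normalize (z - w) - u)
    rw [map_sub, h₁, norm_sub_rev] at h₂
    linarith
  calc 1 - ‖u - normalize (z - w)‖ ≤ g u + l * g (f w - w) := by nlinarith
    _ = g (u + l • (f w - w)) := by rw [map_add, map_smul, smul_eq_mul]
    _ ≤ ‖u + l • (f w - w)‖ := hg_le _

lemma exists_norm_eq_one_forall_le_norm_add_smul [ProperSpace V] (hf : LipschitzWith 1 f)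
    (h : ¬ Bornology.IsBounded (outwardPoints f)) :
    ∃ u : V, ‖u‖ = 1 ∧ ∀ (w : V) (l : ℝ), 0 < l → 1 ≤ ‖u + l • (f w - w)‖ := by
  simp only [isBounded_iff_forall_norm_le, not_exists, not_forall, not_le] at h
  choose z hz_mem hz using fun n : ℕ => h n
  have hz_top : Tendsto (fun n => ‖z n‖) atTop atTop :=
    tendsto_atTop_mono (fun n => (hz n).le) tendsto_natCast_atTop_atTop
  have hz_sphere : ∀ n, normalize (z n) ∈ sphere 0 1 := fun n =>
    mem_sphere_zero_iff_norm.2 <| norm_normalize <| norm_pos_iff.1 <|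
      (Nat.cast_nonneg n).trans_lt (hz n)
  obtain ⟨u, hu, φ, hφ, hlim⟩ := (isCompact_sphere 0 1).tendsto_subseq hz_sphere
  refine ⟨u, mem_sphere_zero_iff_norm.1 hu, fun w l hl => ?_⟩
  have hzφ_top := hz_top.comp hφ.tendsto_atTop
  have hlim_w := tendsto_normalize_sub hzφ_top hlim w
  refine le_of_tendsto (by simpa using (tendsto_const_nhds (x := u)).sub hlim_w |>.norm
    |> (tendsto_const_nhds (x := (1 : ℝ))).sub) ?_
  filter_upwards [hzφ_top.eventually_gt_atTop (2 * ‖w‖)] with k hk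
  obtain ⟨c, hc, hfz⟩ := hz_mem (φ k)
  exact one_sub_norm_sub_normalize_le_norm_add_smul hf hfz hc
    (by linarith [norm_sub_norm_le (z (φ k)) w, show 2 * ‖w‖ < ‖z (φ k)‖ from hk]) u hl.le

end Nonexpansive

section Illumination

variable {V : Type*} [NormedAddCommGroup V] [NormedSpace ℝ V]

lemma Illuminates.mono {S T K : Set V} (hST : S ⊆ T) (h : Illuminates S K) : Illuminates T K :=
  fun x hx => let ⟨v, hv, l, hl, hx'⟩ := h x hx; ⟨v, hST hv, l, hl, hx'⟩

lemma Illuminates.exists_fin {ι : Type*} {v : ι → V} {K : Set V}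
    (hK : IsCompact (frontier K)) (h : Illuminates (range v) K) :
    ∃ (m : ℕ) (e : Fin m → ι), Illuminates (range (v ∘ e)) K := by
  obtain ⟨s, hs⟩ := hK.elim_finite_subcover
    (fun i => ⋃ l ∈ Ioi (0 : ℝ), (· + l • v i) ⁻¹' interior K)
    (fun i => isOpen_biUnion fun l _ => isOpen_interior.preimage (continuous_add_const _))
    fun x hx => by
      obtain ⟨_, ⟨i, rfl⟩, l, hl, hxl⟩ := h x hx
      exact mem_iUnion.2 ⟨i, mem_iUnion₂.2 ⟨l, hl, hxl⟩⟩
  refine ⟨s.card, (↑) ∘ s.equivFin.symm, fun x hx => ?_⟩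
  obtain ⟨i, hi, l, hl, hxl⟩ := by simpa only [mem_iUnion, exists_prop] using hs hx
  exact ⟨v i, ⟨s.equivFin ⟨i, hi⟩, by simp⟩, l, hl, hxl⟩

lemma illuminates_closedBall_iff {S : Set V} :
    Illuminates S (closedBall 0 1) ↔
      ∀ x : V, ‖x‖ = 1 → ∃ v ∈ S, ∃ l : ℝ, 0 < l ∧ ‖x + l • v‖ < 1 := by
  simp [Illuminates, frontier_closedBall (0 : V) one_ne_zero,
    interior_closedBall (0 : V) one_ne_zero]

lemma illuminates_closedBall_range_sub {f : V → V}
    (h : ∀ y : V, y ≠ 0 → ∃ (w : V) (l : ℝ), 0 < l ∧ w - f w = l • y) :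
    Illuminates (range fun w => f w - w) (closedBall 0 1) := by
  refine illuminates_closedBall_iff.2 fun x hx => ?_
  obtain ⟨w, l, hl, hw⟩ := h x (norm_ne_zero_iff.1 (by rw [hx]; exact one_ne_zero))
  refine ⟨f w - w, ⟨w, rfl⟩, l⁻¹, inv_pos.2 hl, ?_⟩
  rw [← neg_sub, hw, smul_neg, smul_smul, inv_mul_cancel₀ hl.ne', one_smul, add_neg_cancel,
    norm_zero]
  exact one_pos

end Illumination

/-- For a nonexpansive map `f` on a finite dimensional real normed space the following
are equivalent: the fixed point set is nonempty and bounded; every nonzero direction `y`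
is realized as `w - f(w) = λ y` with `λ > 0`; finitely many vectors of the form
`f(wᵢ) - wᵢ` illuminate the closed unit ball. -/
theorem stmt6 {V : Type*} [NormedAddCommGroup V] [NormedSpace ℝ V] [FiniteDimensional ℝ V]
    (f : V → V) (hf : ∀ x y : V, ‖f x - f y‖ ≤ ‖x - y‖) :
    List.TFAE [
      {x : V | f x = x}.Nonempty ∧ Bornology.IsBounded {x : V | f x = x},
      ∀ y : V, y ≠ 0 → ∃ (w : V) (l : ℝ), 0 < l ∧ w - f w = l • y,
      ∃ (m : ℕ) (w : Fin m → V),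
        Illuminates {v : V | ∃ i, v = f (w i) - w i} (Metric.closedBall 0 1)] := by
  have hf' : LipschitzWith 1 f := lipschitzWith_iff_norm_sub_le.2 (by simpa using hf)
  tfae_have 1 → 2 := fun ⟨hne, hb⟩ _ hy =>
    exists_sub_eq_smul_of_isBounded_fixedPoints hf' hne hb hy
  tfae_have 2 → 3 := by
    intro h
    obtain ⟨m, w, hw⟩ := (illuminates_closedBall_range_sub h).exists_fin (by
      simpa [frontier_closedBall (0 : V) one_ne_zero] using isCompact_sphere (0 : V) 1)
    refine ⟨m, w, hw.mono ?_⟩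
    rintro _ ⟨i, rfl⟩
    exact ⟨i, rfl⟩
  tfae_have 3 → 1 := by
    rintro ⟨m, w, hw⟩
    by_contra h
    obtain ⟨u, hu, hu_far⟩ := exists_norm_eq_one_forall_le_norm_add_smul hf'
      (mt (fixedPoints_nonempty_and_isBounded hf') h)
    obtain ⟨_, ⟨i, rfl⟩, l, hl, hlt⟩ := illuminates_closedBall_iff.1 hw u hu
    exact (hu_far (w i) l hl).not_gt hlt
  tfae_finish
end

section
/- Let f : V → V be a nonexpansive map on a finite dimensional real normed space (V,‖·‖). Suppose R > 0 is such that Fix(f) = {x : f(x) = x} is nonempty and contained in the open ball of radius R about 0, and let ε = min{‖x − f(x)‖ : ‖x‖ = R}, which is positive. Then every nonexpansive map g : V → V satisfying sup{‖f(x) − g(x)‖ : ‖x‖ = R} < ε/2 has a nonempty set of fixed points, and Fix(g) is contained in the closed ball of radius R about 0. -/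
/-!
For a nonexpansive `F`, a base point `b` and `0 ≤ t < 1`, the contraction
`z ↦ lineMap b (F z) t = (1 - t) • b + t • F z` has a unique fixed point `x_t`, and `t ↦ x_t` is
continuous on `[0, 1)`. Since `dist x_t (F x_t) = (1 - t) * dist b (F x_t)`, if the path stays in
a compact set then `F` has a fixed point there. If moreover `b` is fixed by another nonexpansive
`G`, then `dist x_t (F x_t) ≤ dist (G x_t) (F x_t)`, so the path never meets a sphere on which
`dist (G x) (F x) < dist x (F x)`, and by connectedness it stays on the side of `b`.

On the sphere of radius `R` this inequality holds both for `(G, F) = (f, g)`, because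
`‖x - g x‖ > ε - ε / 2`, and for `(G, F) = (g, f)`, because `‖x - f x‖ ≥ ε`. Starting from a fixed
point of `f` inside the ball gives a fixed point of `g` in the closed ball; starting from a fixed
point of `g` outside the closed ball would give a fixed point of `f` outside the open ball, where
`f` has none.
-/

open Set Metric Filter Topology AffineMap

lemma IsCompact.exists_fixedPoint_of_forall_exists_dist_lt {X : Type*} [MetricSpace X]
    {K : Set X} {F : X → X} (hK : IsCompact K) (hF : ContinuousOn F K)
    (h : ∀ δ > 0, ∃ x ∈ K, dist x (F x) < δ) : ∃ x ∈ K, F x = x := by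
  obtain ⟨x₀, hx₀, -⟩ := h 1 one_pos
  obtain ⟨x, hxK, hmin⟩ :=
    hK.exists_isMinOn ⟨x₀, hx₀⟩ (by fun_prop : ContinuousOn (fun x => dist x (F x)) K)
  refine ⟨x, hxK, (dist_eq_zero.1 ?_).symm⟩
  by_contra hne
  obtain ⟨y, hyK, hy⟩ := h _ (dist_nonneg.lt_of_ne' hne)
  exact (hmin hyK).not_gt hy

section

variable {E : Type*} [NormedAddCommGroup E] [NormedSpace ℝ E] {F G : E → E} {b p x y : E}
  {r s t : ℝ}

lemma dist_lineMap_lineMap_same (b u v : E) (t : ℝ) :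
    dist (lineMap b u t) (lineMap b v t) = |t| * dist u v := by
  rw [dist_eq_norm, dist_eq_norm, lineMap_apply_module', lineMap_apply_module',
    add_sub_add_right_eq_sub, ← smul_sub, sub_sub_sub_cancel_right, norm_smul, Real.norm_eq_abs]

lemma dist_left_eq_of_lineMap_eq (hx : lineMap b (F x) t = x) (ht : 0 ≤ t) :
    dist b x = t * dist b (F x) := by
  conv_lhs => rw [← hx]
  rw [dist_left_lineMap, Real.norm_of_nonneg ht]

lemma dist_apply_eq_of_lineMap_eq (hx : lineMap b (F x) t = x) (ht : t ≤ 1) :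
    dist x (F x) = (1 - t) * dist b (F x) := by
  rw [← Real.norm_of_nonneg (sub_nonneg.2 ht), ← dist_lineMap_right, hx]

lemma one_sub_mul_dist_apply_le (hF : LipschitzWith 1 F) (hx : lineMap b (F x) t = x)
    (ht : 0 ≤ t) : (1 - t) * dist b (F x) ≤ dist b (F b) := by
  have hFbx : dist (F b) (F x) ≤ dist b x := by simpa using hF.dist_le_mul b x
  linarith [dist_triangle b (F b) (F x), dist_left_eq_of_lineMap_eq hx ht]

lemma dist_le_of_lineMap_eq (hF : LipschitzWith 1 F) (hx : lineMap b (F x) s = x)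
    (hy : lineMap b (F y) t = y) (hs : s ∈ Icc 0 r) (ht : t ∈ Icc 0 r) (hr : r < 1) :
    dist x y ≤ dist b (F b) / (1 - r) ^ 2 * dist s t := by
  have hxy : dist x y ≤ s * dist x y + dist s t * dist b (F y) :=
    calc dist x y = dist (lineMap b (F x) s) (lineMap b (F y) t) := by rw [hx, hy]
      _ ≤ dist (lineMap b (F x) s) (lineMap b (F y) s) +
          dist (lineMap b (F y) s) (lineMap b (F y) t) := dist_triangle _ _ _
      _ = s * dist (F x) (F y) + dist s t * dist b (F y) := by
        rw [dist_lineMap_lineMap_same, dist_lineMap_lineMap, abs_of_nonneg hs.1]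
      _ ≤ s * dist x y + dist s t * dist b (F y) := by
        gcongr
        · exact hs.1
        · simpa using hF.dist_le_mul x y
  have hFy := one_sub_mul_dist_apply_le hF hy ht.1
  have hr' : 0 < 1 - r := sub_pos.2 hr
  have hst : (1 - r) ^ 2 ≤ (1 - s) * (1 - t) := by
    rw [sq]
    exact mul_le_mul (by linarith [hs.2]) (by linarith [ht.2]) hr'.le (by linarith [hs.2])
  rw [div_mul_eq_mul_div, le_div_iff₀ (by positivity)]
  calc dist x y * (1 - r) ^ 2 ≤ (1 - s) * dist x y * (1 - t) := by
        nlinarith [dist_nonneg (x := x) (y := y)]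
    _ ≤ dist s t * ((1 - t) * dist b (F y)) := by nlinarith [ht.2]
    _ ≤ dist b (F b) * dist s t := by nlinarith [dist_nonneg (x := s) (y := t)]

lemma dist_le_of_lineMap_eq_of_apply_eq (hF : LipschitzWith 1 F) (hp : F p = p)
    (hx : lineMap b (F x) t = x) (ht : t ∈ Ico 0 1) : dist x p ≤ dist b p := by
  have : dist x p ≤ t * dist x p + (1 - t) * dist b p :=
    calc dist x p ≤ dist (lineMap b (F x) t) (lineMap b p t) + dist (lineMap b p t) p := by
          rw [hx]; exact dist_triangle _ _ _
      _ = t * dist (F x) p + (1 - t) * dist b p := by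
        rw [dist_lineMap_lineMap_same, dist_lineMap_right, abs_of_nonneg ht.1,
          Real.norm_of_nonneg (by linarith [ht.2])]
      _ ≤ t * dist x p + (1 - t) * dist b p := by
        gcongr
        · exact ht.1
        · simpa [hp] using hF.dist_le_mul x p
  nlinarith [ht.2]

lemma dist_apply_le_of_lineMap_eq (hG : LipschitzWith 1 G) (hb : G b = b)
    (hx : lineMap b (F x) t = x) (ht : t ∈ Icc 0 1) : dist x (F x) ≤ dist (G x) (F x) := by
  have hGx : dist b (G x) ≤ dist b x := by simpa [hb] using hG.dist_le_mul b x
  rw [dist_apply_eq_of_lineMap_eq hx ht.2]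
  linarith [dist_left_eq_of_lineMap_eq hx ht.1, dist_triangle b (G x) (F x)]

lemma exists_lineMap_eq [CompleteSpace E] (hF : LipschitzWith 1 F) (b : E) (ht : t ∈ Ico 0 1) :
    ∃ x, lineMap b (F x) t = x := by
  have : Nonempty E := ⟨b⟩
  have hC : ContractingWith ⟨t, ht.1⟩ fun z => lineMap b (F z) t := by
    refine ⟨ht.2, LipschitzWith.of_dist_le_mul fun x y => ?_⟩
    rw [dist_lineMap_lineMap_same, abs_of_nonneg ht.1]
    change t * _ ≤ t * _
    gcongr
    · exact ht.1
    · simpa using hF.dist_le_mul x y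
  exact ⟨_, hC.fixedPoint_isFixedPt⟩

lemma exists_continuousOn_lineMap_eq [CompleteSpace E] (hF : LipschitzWith 1 F) (b : E) :
    ∃ φ : ℝ → E, (∀ t ∈ Ico 0 1, lineMap b (F (φ t)) t = φ t) ∧ ContinuousOn φ (Ico 0 1) := by
  choose! φ hφ using fun t (ht : t ∈ Ico (0 : ℝ) 1) => exists_lineMap_eq hF b ht
  refine ⟨φ, hφ, LocallyLipschitzOn.continuousOn fun t ht => ?_⟩
  obtain ⟨r, htr, hr⟩ := exists_between ht.2
  refine ⟨(dist b (F b) / (1 - r) ^ 2).toNNReal, Ico 0 1 ∩ Iio r,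
    inter_mem_nhdsWithin _ (Iio_mem_nhds htr), LipschitzOnWith.of_dist_le' fun s hs u hu => ?_⟩
  exact dist_le_of_lineMap_eq hF (hφ s hs.1) (hφ u hu.1) ⟨hs.1.1, hs.2.le⟩ ⟨hu.1.1, hu.2.le⟩ hr

lemma exists_fixedPoint_of_mapsTo {K : Set E} {φ : ℝ → E} (hK : IsCompact K)
    (hF : Continuous F) (hφ : ∀ t ∈ Ico 0 1, lineMap b (F (φ t)) t = φ t)
    (hφK : MapsTo φ (Ico 0 1) K) : ∃ x ∈ K, F x = x := by
  obtain ⟨M, hM⟩ := hK.exists_bound_of_continuousOn (f := fun x => dist b (F x)) (by fun_prop)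
  refine hK.exists_fixedPoint_of_forall_exists_dist_lt hF.continuousOn fun δ hδ => ?_
  have hlim : Tendsto (fun t : ℝ => (1 - t) * M) (𝓝[<] 1) (𝓝 0) := by
    have : Tendsto (fun t : ℝ => (1 - t) * M) (𝓝 1) (𝓝 ((1 - 1) * M)) :=
      (Continuous.tendsto (by fun_prop) 1)
    simpa using this.mono_left nhdsWithin_le_nhds
  obtain ⟨t, ht, htM⟩ := ((eventually_mem_set.2 (Ico_mem_nhdsLT one_pos)).and
    (hlim.eventually (gt_mem_nhds hδ))).exists
  refine ⟨φ t, hφK ht, lt_of_le_of_lt ?_ htM⟩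
  rw [dist_apply_eq_of_lineMap_eq (hφ t ht) ht.2.le]
  gcongr
  · linarith [ht.2]
  · simpa using hM _ (hφK ht)

lemma exists_lineMap_eq_forall_dist_ne [CompleteSpace E] (hG : LipschitzWith 1 G)
    (hF : LipschitzWith 1 F) (hb : G b = b) {c : E} {R : ℝ}
    (hsep : ∀ x ∈ sphere c R, dist (G x) (F x) < dist x (F x)) :
    ∃ φ : ℝ → E, φ 0 = b ∧ (∀ t ∈ Ico 0 1, lineMap b (F (φ t)) t = φ t) ∧
      ContinuousOn (fun t => dist (φ t) c) (Ico 0 1) ∧ ∀ t ∈ Ico 0 1, dist (φ t) c ≠ R := by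
  obtain ⟨φ, hφ, hφc⟩ := exists_continuousOn_lineMap_eq hF b
  refine ⟨φ, by simpa using (hφ 0 ⟨le_rfl, one_pos⟩).symm, hφ, by fun_prop, fun t ht hR => ?_⟩
  exact (dist_apply_le_of_lineMap_eq hG hb (hφ t ht) (Ico_subset_Icc_self ht)).not_gt
    (hsep _ hR)

lemma exists_fixedPoint_mem_closedBall [ProperSpace E] (hG : LipschitzWith 1 G)
    (hF : LipschitzWith 1 F) (hb : G b = b) {c : E} {R : ℝ} (hbR : b ∈ ball c R)
    (hsep : ∀ x ∈ sphere c R, dist (G x) (F x) < dist x (F x)) :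
    ∃ x ∈ closedBall c R, F x = x := by
  obtain ⟨φ, hφ0, hφ, hφc, hφR⟩ := exists_lineMap_eq_forall_dist_ne hG hF hb hsep
  refine exists_fixedPoint_of_mapsTo (isCompact_closedBall c R) hF.continuous hφ fun t ht => ?_
  exact (isPreconnected_Ico.gt_of_ne hφc hφR ⟨0, ⟨le_rfl, one_pos⟩, hφ0 ▸ hbR⟩ ht).le

lemma exists_fixedPoint_notMem_ball [ProperSpace E] (hG : LipschitzWith 1 G)
    (hF : LipschitzWith 1 F) (hb : G b = b) {c : E} {R : ℝ} (hbR : b ∉ closedBall c R)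
    (hp : F p = p) (hsep : ∀ x ∈ sphere c R, dist (G x) (F x) < dist x (F x)) :
    ∃ x, F x = x ∧ x ∉ ball c R := by
  obtain ⟨φ, hφ0, hφ, hφc, hφR⟩ := exists_lineMap_eq_forall_dist_ne hG hF hb hsep
  have hK : IsCompact (closedBall p (dist b p) ∩ (ball c R)ᶜ) :=
    (isCompact_closedBall p _).inter_right isOpen_ball.isClosed_compl
  obtain ⟨x, hxK, hx⟩ := exists_fixedPoint_of_mapsTo hK hF.continuous hφ fun t ht => by
    refine ⟨dist_le_of_lineMap_eq_of_apply_eq hF hp (hφ t ht) ht, ?_⟩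
    simpa using (isPreconnected_Ico.lt_of_ne hφc hφR
      ⟨0, ⟨le_rfl, one_pos⟩, by simpa [hφ0] using hbR⟩ ht).le
  exact ⟨x, hx, hxK.2⟩

end

theorem stmt7_general {V : Type*} [NormedAddCommGroup V] [NormedSpace ℝ V] [FiniteDimensional ℝ V]
    (f : V → V) (hf : ∀ x y : V, ‖f x - f y‖ ≤ ‖x - y‖)
    (R : ℝ) (hne : {x : V | f x = x}.Nonempty)
    (hsub : {x : V | f x = x} ⊆ Metric.ball 0 R)
    (ε : ℝ) (hε : IsLeast {r : ℝ | ∃ x : V, ‖x‖ = R ∧ r = ‖x - f x‖} ε) :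
    0 < ε ∧ ∀ g : V → V, (∀ x y : V, ‖g x - g y‖ ≤ ‖x - y‖) →
      (∀ x : V, ‖x‖ = R → ‖f x - g x‖ < ε / 2) →
      {x : V | g x = x}.Nonempty ∧ {x : V | g x = x} ⊆ Metric.closedBall 0 R := by
  have hfL : LipschitzWith 1 f := .of_dist_le_mul fun x y => by simpa [dist_eq_norm] using hf x y
  have hεf : ∀ x ∈ sphere (0 : V) R, ε ≤ dist x (f x) := fun x hx =>
    hε.2 ⟨x, mem_sphere_zero_iff_norm.1 hx, dist_eq_norm x (f x)⟩
  have hε0 : 0 < ε := by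
    obtain ⟨x, hxR, rfl⟩ := hε.1
    refine norm_pos_iff.2 (sub_ne_zero.2 fun hfx => ?_)
    simpa [hxR] using hsub hfx.symm
  refine ⟨hε0, fun g hg hfg => ?_⟩
  have hgL : LipschitzWith 1 g := .of_dist_le_mul fun x y => by simpa [dist_eq_norm] using hg x y
  have hfg' : ∀ x ∈ sphere (0 : V) R, dist (f x) (g x) < ε / 2 := fun x hx => by
    simpa [dist_eq_norm] using hfg x (mem_sphere_zero_iff_norm.1 hx)
  obtain ⟨p, hp⟩ := hne
  obtain ⟨x, -, hx⟩ := exists_fixedPoint_mem_closedBall hfL hgL hp (hsub hp) fun x hx => by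
    linarith [hεf x hx, hfg' x hx, dist_triangle x (g x) (f x), dist_comm (f x) (g x)]
  refine ⟨⟨x, hx⟩, fun q hq => by_contra fun hqR => ?_⟩
  obtain ⟨y, hy, hyR⟩ := exists_fixedPoint_notMem_ball hgL hfL hq hqR hp fun x hx => by
    linarith [hεf x hx, hfg' x hx, dist_comm (f x) (g x)]
  exact hyR (hsub hy)

/-- If `f` is nonexpansive with nonempty fixed point set contained in the open ball of
radius `R` about `0`, and `ε` is the minimum of `‖x - f x‖` over the sphere of radius
`R`, then `ε > 0` and every nonexpansive `g` which is within `ε/2` of `f` on that sphere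
has a nonempty fixed point set contained in the closed ball of radius `R`. -/
theorem stmt7 {V : Type*} [NormedAddCommGroup V] [NormedSpace ℝ V] [FiniteDimensional ℝ V]
    (f : V → V) (hf : ∀ x y : V, ‖f x - f y‖ ≤ ‖x - y‖)
    (R : ℝ) (hR : 0 < R) (hne : {x : V | f x = x}.Nonempty)
    (hsub : {x : V | f x = x} ⊆ Metric.ball 0 R)
    (ε : ℝ) (hε : IsLeast {r : ℝ | ∃ x : V, ‖x‖ = R ∧ r = ‖x - f x‖} ε) :
    0 < ε ∧ ∀ g : V → V, (∀ x y : V, ‖g x - g y‖ ≤ ‖x - y‖) →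
      (∀ x : V, ‖x‖ = R → ‖f x - g x‖ < ε / 2) →
      {x : V | g x = x}.Nonempty ∧ {x : V | g x = x} ⊆ Metric.closedBall 0 R :=
  stmt7_general f hf R hne hsub ε hε
end

section
/- Let f : V → V be a nonexpansive map on a finite dimensional real normed space (V,‖·‖) whose fixed point set Fix(f) = {x : f(x) = x} is unbounded. Then for each δ > 0 there exists a nonexpansive map g : V → V with no fixed points such that sup_{x ∈ V} ‖f(x) − g(x)‖ ≤ δ. -/
/-!
Choose a unit vector `u` that is a limit of directions `p / ‖p‖` of fixed points `p` of `f`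
with `‖p‖ → ∞` (compactness of the unit sphere), and put `g = f + δ • u`. If `g x = x`, then
for every fixed point `p` of `f`, nonexpansiveness gives `‖(p - x) + δ • u‖ ≤ ‖p - x‖`. But for
`p` far out in direction `u`, the vector `p - x` points almost along `u`, and adding `δ • u`
to it increases its norm by nearly `δ`.
-/

open Filter Topology Bornology

namespace NormedSpace

variable {V : Type*} [NormedAddCommGroup V] [NormedSpace ℝ V]

theorem norm_normalize_le (x : V) : ‖normalize x‖ ≤ 1 := by
  by_cases hx : x = 0
  · simp [hx]
  · exact (norm_normalize hx).le

theorem norm_normalize_sub_normalize_le {a : V} (ha : a ≠ 0) (b : V) :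
    ‖normalize a - normalize b‖ ≤ 2 * ‖a - b‖ / ‖a‖ := by
  have ha' : 0 < ‖a‖ := norm_pos_iff.2 ha
  have key : normalize a - normalize b =
      ‖a‖⁻¹ • ((a - b) + (‖b‖ - ‖a‖) • normalize b) := by
    rw [sub_smul, norm_smul_normalize, smul_add, smul_sub, smul_sub, smul_smul,
      inv_mul_cancel₀ ha'.ne', one_smul]
    simp only [normalize]
    abel
  rw [key, norm_smul, norm_inv, norm_norm, inv_mul_eq_div]
  gcongr
  calc ‖a - b + (‖b‖ - ‖a‖) • normalize b‖
      ≤ ‖a - b‖ + |‖b‖ - ‖a‖| * ‖normalize b‖ := by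
        simpa [norm_smul] using norm_add_le (a - b) ((‖b‖ - ‖a‖) • normalize b)
    _ ≤ ‖a - b‖ + ‖a - b‖ * 1 := by
        gcongr
        · rw [abs_sub_comm]; exact abs_norm_sub_norm_le a b
        · exact norm_normalize_le b
    _ = 2 * ‖a - b‖ := by ring

theorem le_norm_add_smul {z : V} (hz : z ≠ 0) (v : V) {δ : ℝ} (hδ : 0 ≤ δ) :
    ‖z‖ + δ * (1 - ‖normalize z - v‖) ≤ ‖z + δ • v‖ := by
  have hstretch : ‖z + δ • normalize z‖ = ‖z‖ + δ := by
    nth_rewrite 1 [← norm_smul_normalize z]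
    rw [← add_smul, norm_smul, norm_normalize hz, mul_one, Real.norm_of_nonneg (by positivity)]
  calc ‖z‖ + δ * (1 - ‖normalize z - v‖)
      = ‖z + δ • normalize z‖ - ‖δ • (normalize z - v)‖ := by
        rw [hstretch, norm_smul, Real.norm_of_nonneg hδ]; ring
    _ ≤ ‖(z + δ • normalize z) - δ • (normalize z - v)‖ := norm_sub_norm_le _ _
    _ = ‖z + δ • v‖ := by rw [smul_sub]; abel_nf

def IsAsymptoticDirection (s : Set V) (u : V) : Prop :=
  MapClusterPt u (cobounded V ⊓ 𝓟 s) normalize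

theorem exists_isAsymptoticDirection [ProperSpace V] {s : Set V} (hs : ¬IsBounded s) :
    ∃ u, ‖u‖ = 1 ∧ IsAsymptoticDirection s u := by
  have : NeBot (cobounded V ⊓ 𝓟 s) := by
    rwa [neBot_iff, ne_eq, inf_principal_eq_bot, ← isBounded_def]
  have hne : ∀ᶠ p in cobounded V ⊓ 𝓟 s, normalize p ∈ Metric.sphere (0 : V) 1 := by
    filter_upwards [inf_le_left (a := cobounded V) (eventually_cobounded_le_norm 1)] with p hp
    simpa using norm_normalize (norm_pos_iff.1 (one_pos.trans_le hp))
  obtain ⟨u, hu, hcl⟩ :=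
    (isCompact_sphere (0 : V) 1).exists_mapClusterPt_of_frequently hne.frequently
  exact ⟨u, mem_sphere_zero_iff_norm.1 hu, hcl⟩

theorem add_smul_ne_self_of_isAsymptoticDirection {f : V → V}
    (hf : ∀ x y : V, ‖f x - f y‖ ≤ ‖x - y‖) {u : V}
    (hu : IsAsymptoticDirection {x | f x = x} u) {δ : ℝ} (hδ : 0 < δ) (x : V) :
    f x + δ • u ≠ x := by
  intro hx
  obtain ⟨p, hp_near, hp_far, hp_fix⟩ : ∃ p, dist (normalize p) u < 1 / 2 ∧
      4 * ‖x‖ + 1 ≤ ‖p‖ ∧ f p = p := by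
    have hnear : ∀ᶠ y in 𝓝 u, dist y u < 1 / 2 := Metric.ball_mem_nhds u (by norm_num)
    have hfar_fix : ∀ᶠ p in cobounded V ⊓ 𝓟 {x | f x = x}, 4 * ‖x‖ + 1 ≤ ‖p‖ ∧ f p = p :=
      inter_mem_inf (eventually_cobounded_le_norm _) (mem_principal_self _)
    exact ((hu.frequently hnear).and_eventually hfar_fix).exists
  have hp0 : p ≠ 0 := norm_pos_iff.1 (by linarith [norm_nonneg x])
  have hz0 : p - x ≠ 0 := sub_ne_zero.2 fun h => by rw [h] at hp_far; linarith [norm_nonneg x]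
  have hdir : ‖normalize (p - x) - u‖ < 1 := calc
    ‖normalize (p - x) - u‖ ≤ ‖normalize p - normalize (p - x)‖ + ‖normalize p - u‖ := by
      rw [norm_sub_rev (normalize p)]; exact norm_sub_le_norm_sub_add_norm_sub _ _ _
    _ < 2 * ‖p - (p - x)‖ / ‖p‖ + 1 / 2 := by
      rw [dist_eq_norm] at hp_near
      exact add_lt_add_of_le_of_lt (norm_normalize_sub_normalize_le hp0 _) hp_near
    _ ≤ 1 := by
      rw [sub_sub_cancel, div_add' _ _ _ (by positivity), div_le_one (by positivity)]
      linarith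
  have hshift : ‖(p - x) + δ • u‖ ≤ ‖p - x‖ := by
    calc ‖(p - x) + δ • u‖ = ‖f p - f x‖ := by
          rw [hp_fix, eq_sub_of_add_eq hx]; abel_nf
      _ ≤ ‖p - x‖ := hf p x
  have hgain := mul_pos hδ (sub_pos.2 hdir)
  linarith [le_norm_add_smul hz0 u hδ.le]

end NormedSpace

/-- If the fixed point set of a nonexpansive map `f` on a finite dimensional real normed
space is unbounded, then for every `δ > 0` there is a fixed-point-free nonexpansive map
`g` with `‖f x - g x‖ ≤ δ` for all `x`. -/
theorem stmt8 {V : Type*} [NormedAddCommGroup V] [NormedSpace ℝ V] [FiniteDimensional ℝ V]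
    (f : V → V) (hf : ∀ x y : V, ‖f x - f y‖ ≤ ‖x - y‖)
    (hub : ¬ Bornology.IsBounded {x : V | f x = x})
    (δ : ℝ) (hδ : 0 < δ) :
    ∃ g : V → V, (∀ x y : V, ‖g x - g y‖ ≤ ‖x - y‖) ∧
      {x : V | g x = x} = ∅ ∧ ∀ x : V, ‖f x - g x‖ ≤ δ := by
  obtain ⟨u, hu_norm, hu⟩ := NormedSpace.exists_isAsymptoticDirection hub
  refine ⟨fun x => f x + δ • u, fun x y => by simpa using hf x y, ?_, fun x => ?_⟩
  · exact Set.eq_empty_of_forall_notMem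
      (NormedSpace.add_smul_ne_self_of_isAsymptoticDirection hf hu hδ)
  · simp [norm_smul, hu_norm, abs_of_pos hδ]
end

section
/- Let K be a compact convex set with nonempty interior in a finite dimensional real vector space V. (a) If x, y are boundary points of K such that the segment {t x + (1−t) y : 0 ≤ t ≤ 1} is contained in the boundary of K, and v ∈ V illuminates x, then v illuminates t x + (1−t) y for every 0 < t ≤ 1. (b) If a set S ⊆ V illuminates every extreme point of K, then S illuminates K. -/
/-- (a) If the segment from `x` to `y` lies in the boundary of a compact convex body `K`
and `v` illuminates `x`, then `v` illuminates `t x + (1-t) y` for all `0 < t ≤ 1`.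
(b) If `S` illuminates every extreme point of `K`, then `S` illuminates all of the
boundary of `K`. -/
theorem stmt9 {V : Type*} [NormedAddCommGroup V] [NormedSpace ℝ V] [FiniteDimensional ℝ V]
    (K : Set V) (hK : IsCompact K) (hKconv : Convex ℝ K)
    (hKint : (interior K).Nonempty) :
    (∀ x ∈ frontier K, ∀ y ∈ frontier K,
      (∀ t : ℝ, 0 ≤ t → t ≤ 1 → t • x + (1 - t) • y ∈ frontier K) →
      ∀ v : V, (∃ l : ℝ, 0 < l ∧ x + l • v ∈ interior K) →
      ∀ t : ℝ, 0 < t → t ≤ 1 →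
        ∃ l : ℝ, 0 < l ∧ (t • x + (1 - t) • y) + l • v ∈ interior K) ∧
    (∀ S : Set V,
      (∀ x ∈ Set.extremePoints ℝ K, ∃ v ∈ S, ∃ l : ℝ, 0 < l ∧ x + l • v ∈ interior K) →
      ∀ x ∈ frontier K, ∃ v ∈ S, ∃ l : ℝ, 0 < l ∧ x + l • v ∈ interior K) := by
  have hKclosed : IsClosed K := hK.isClosed
  have hfrontier : frontier K ⊆ K := by
    rw [frontier_eq_closure_inter_closure, hKclosed.closure_eq]
    exact Set.inter_subset_left
  -- Key combination lemma: if `z` is illuminated by `v` and `x = a • z + b • w`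
  -- with `w ∈ K`, `a > 0`, `a + b = 1`, `b ≥ 0`, then `x` is illuminated by `v`.
  have key : ∀ (z w : V), w ∈ K → ∀ (v : V) (l : ℝ), 0 < l → z + l • v ∈ interior K →
      ∀ a b : ℝ, 0 < a → 0 ≤ b → a + b = 1 →
      ∃ l' : ℝ, 0 < l' ∧ (a • z + b • w) + l' • v ∈ interior K := by
    intro z w hw v l hl hzl a b ha hb hab
    refine ⟨a * l, mul_pos ha hl, ?_⟩
    have := hKconv.combo_interior_self_mem_interior hzl hw ha hb hab
    convert this using 1
    rw [smul_add, smul_smul]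
    abel
  constructor
  · intro x _ y hy _ v ⟨l, hl, hxl⟩ t ht ht1
    exact key x y (hfrontier hy) v l hl hxl t (1 - t) ht (by linarith) (by ring)
  · intro S hS
    -- The set of illuminated points
    set B : Set V := {x : V | ∃ v ∈ S, ∃ l : ℝ, 0 < l ∧ x + l • v ∈ interior K} with hB
    have hBopen : IsOpen B := by
      have : B = ⋃ v ∈ S, ⋃ l ∈ Set.Ioi (0:ℝ), (fun x => x + l • v) ⁻¹' interior K := by
        ext x
        simp [hB, Set.mem_setOf_eq]
      rw [this]
      exact isOpen_biUnion fun v _ => isOpen_biUnion fun l _ =>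
        (isOpen_interior).preimage (continuous_id.add continuous_const)
    -- The complement within K
    by_contra hcon
    push_neg at hcon
    obtain ⟨x₀, hx₀f, hx₀⟩ := hcon
    set C : Set V := K \ B with hC
    have hCne : C.Nonempty := ⟨x₀, hfrontier hx₀f, by
      intro hxB
      obtain ⟨v, hv, l, hl, hmem⟩ := hxB
      exact (hx₀ v hv l hl) hmem⟩
    have hCcompact : IsCompact C := hK.of_isClosed_subset
      (hKclosed.sdiff hBopen) Set.diff_subset
    obtain ⟨p, hp⟩ := hCcompact.extremePoints_nonempty hCne
    obtain ⟨hpC, hpext⟩ := hp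
    -- p is an extreme point of K
    have hpK : p ∈ Set.extremePoints ℝ K := by
      refine ⟨hpC.1, fun y hy z hz hseg => ?_⟩
      -- show y, z ∈ C
      obtain ⟨a, b, ha, hb, hab, hcomb⟩ := hseg
      have hyC : y ∈ C := by
        refine ⟨hy, fun hyB => ?_⟩
        obtain ⟨v, hv, l, hl, hmem⟩ := hyB
        obtain ⟨l', hl', hmem'⟩ := key y z hz v l hl hmem a b ha hb.le hab
        rw [hcomb] at hmem'
        exact hpC.2 ⟨v, hv, l', hl', hmem'⟩
      have hzC : z ∈ C := by
        refine ⟨hz, fun hzB => ?_⟩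
        obtain ⟨v, hv, l, hl, hmem⟩ := hzB
        obtain ⟨l', hl', hmem'⟩ := key z y hy v l hl hmem b a hb ha.le (by linarith)
        rw [add_comm (b • z) (a • y), hcomb] at hmem'
        exact hpC.2 ⟨v, hv, l', hl', hmem'⟩
      exact hpext hyC hzC ⟨a, b, ha, hb, hab, hcomb⟩
    -- but extreme points of K are illuminated, contradiction
    obtain ⟨v, hv, l, hl, hmem⟩ := hS p hpK
    exact hpC.2 ⟨v, hv, l, hl, hmem⟩
end

section
/- Let f : ℝⁿ → ℝⁿ be nonexpansive with respect to the supremum norm ‖x‖_∞ = max_{1 ≤ i ≤ n} |x_i|. Then Fix(f) = {x : f(x) = x} is nonempty and bounded if and only if for every subset J ⊆ {1, …, n} (including the empty set and the whole set) there exists w ∈ ℝⁿ such that f(w)_j < w_j for all j ∈ J and f(w)_j > w_j for all j ∉ J. -/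
open Filter Topology Metric

namespace Stmt10Aux

variable {n : ℕ}

lemma piNormLe {x : Fin n → ℝ} {r : ℝ} (hr : 0 ≤ r) (h : ∀ i, |x i| ≤ r) : ‖x‖ ≤ r :=
  (pi_norm_le_iff_of_nonneg hr).2 fun i => by simpa [Real.norm_eq_abs] using h i

lemma coordLe (x : Fin n → ℝ) (i : Fin n) : |x i| ≤ ‖x‖ := by
  simpa [Real.norm_eq_abs] using norm_le_pi_norm x i

lemma existsNormEq [Nonempty (Fin n)] (x : Fin n → ℝ) : ∃ i, |x i| = ‖x‖ := by
  obtain ⟨i, -, hi⟩ := Finset.exists_max_image Finset.univ (fun i => |x i|)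
    ⟨Classical.arbitrary _, Finset.mem_univ _⟩
  exact ⟨i, le_antisymm (coordLe x i)
    (piNormLe (abs_nonneg _) fun j => hi j (Finset.mem_univ _))⟩

/-- Key lemma: a fixed point of a nonexpansive map is sup-norm bounded by `3‖w‖`
where `w` is a "strict witness" for the sign pattern of `x`. -/
lemma lemA (g : (Fin n → ℝ) → (Fin n → ℝ))
    (hg : ∀ x y, ‖g x - g y‖ ≤ ‖x - y‖)
    (x w : Fin n → ℝ) (hx : g x = x)
    (hw1 : ∀ j, 0 ≤ x j → g w j < w j)
    (hw2 : ∀ j, ¬ 0 ≤ x j → w j < g w j)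
    (hnorm : 3 * ‖w‖ < ‖x‖) : False := by
  have hw0 : 0 ≤ ‖w‖ := norm_nonneg _
  have hne : Nonempty (Fin n) := by
    rcases isEmpty_or_nonempty (Fin n) with h | h
    · exfalso
      have hx0 : x = 0 := Subsingleton.elim _ _
      rw [hx0, norm_zero] at hnorm; linarith
    · exact h
  obtain ⟨i, hi⟩ := existsNormEq (x - w)
  have hKlb : ‖x‖ - ‖w‖ ≤ ‖x - w‖ := norm_sub_norm_le x w
  have hi' : |x i - w i| = ‖x - w‖ := by simpa using hi
  have hwi := abs_le.1 (coordLe w i)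
  have hge : |g x i - g w i| ≤ ‖x - w‖ :=
    le_trans (by simpa using coordLe (g x - g w) i) (hg x w)
  have hxi : g x i = x i := by rw [hx]
  rcases le_or_gt 0 (x i) with hpos | hneg
  · have h1 := hw1 i hpos
    rcases abs_cases (x i - w i) with ⟨he, _⟩ | ⟨he, _⟩
    · have h2 : g x i - g w i ≤ ‖x - w‖ := le_trans (le_abs_self _) hge
      rw [hxi] at h2
      rw [he] at hi'
      linarith
    · rw [he] at hi'
      linarith
  · have h1 := hw2 i (not_le.2 hneg)
    rcases abs_cases (x i - w i) with ⟨he, _⟩ | ⟨he, _⟩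
    · rw [he] at hi'; linarith
    · have h2 : g w i - g x i ≤ |g x i - g w i| := by
        rw [abs_sub_comm]; exact le_abs_self _
      have h3 := le_trans h2 hge
      rw [hxi] at h3
      rw [he] at hi'
      linarith

/-- A nonexpansive self-map of `ℝⁿ` with bounded range has a fixed point. -/
lemma fp (g : (Fin n → ℝ) → (Fin n → ℝ)) (hg : LipschitzWith 1 g)
    (R : ℝ) (hR : ∀ x, ‖g x‖ ≤ R) : ∃ x, g x = x := by
  have hR0 : 0 ≤ R := le_trans (norm_nonneg _) (hR 0)
  have key : ∀ k : ℕ, ∃ x : Fin n → ℝ, x = (((k : ℝ)+1)/((k : ℝ)+2)) • g x := by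
    intro k
    have hc0 : (0:ℝ) ≤ ((k : ℝ)+1)/((k : ℝ)+2) := by positivity
    have hc1 : (((k : ℝ)+1)/((k : ℝ)+2)) < 1 := by
      rw [div_lt_one (by positivity)]; linarith
    have hlip : LipschitzWith ⟨_, hc0⟩ (fun x => (((k : ℝ)+1)/((k : ℝ)+2)) • g x) := by
      apply LipschitzWith.of_dist_le_mul
      intro x y
      have h2 := hg.dist_le_mul x y
      rw [NNReal.coe_one, one_mul] at h2
      calc dist ((((k:ℝ)+1)/((k:ℝ)+2)) • g x) ((((k:ℝ)+1)/((k:ℝ)+2)) • g y)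
          = |((k:ℝ)+1)/((k:ℝ)+2)| * dist (g x) (g y) := by
            rw [dist_smul₀, Real.norm_eq_abs]
        _ ≤ (((k:ℝ)+1)/((k:ℝ)+2)) * dist x y := by
            rw [abs_of_nonneg hc0]
            exact mul_le_mul_of_nonneg_left h2 hc0
    have hcon : ContractingWith ⟨_, hc0⟩ (fun x => (((k : ℝ)+1)/((k : ℝ)+2)) • g x) :=
      ⟨by exact_mod_cast hc1, hlip⟩
    exact ⟨ContractingWith.fixedPoint _ hcon, (hcon.fixedPoint_isFixedPt).symm⟩
  choose u hu using key
  have hub : ∀ k, u k ∈ closedBall (0 : Fin n → ℝ) R := by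
    intro k
    rw [mem_closedBall_zero_iff, hu k, norm_smul, Real.norm_eq_abs]
    have h1 : |((k:ℝ)+1)/((k:ℝ)+2)| ≤ 1 := by
      rw [abs_of_nonneg (by positivity), div_le_one (by positivity)]; linarith
    calc |((k:ℝ)+1)/((k:ℝ)+2)| * ‖g (u k)‖ ≤ 1 * ‖g (u k)‖ :=
        mul_le_mul_of_nonneg_right h1 (norm_nonneg _)
      _ ≤ R := by rw [one_mul]; exact hR _
  obtain ⟨x, -, φ, hφ, hconv⟩ := (isCompact_closedBall (0 : Fin n → ℝ) R).tendsto_subseq hub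
  refine ⟨x, ?_⟩
  have hgt : Tendsto (fun k => g (u (φ k))) atTop (𝓝 (g x)) :=
    (hg.continuous.tendsto x).comp hconv
  have hdiff : Tendsto (fun k => u (φ k) - g (u (φ k))) atTop (𝓝 0) := by
    apply squeeze_zero_norm (a := fun k : ℕ => R / ((k:ℝ)+2))
    · intro k
      have h1 : ‖u (φ k) - g (u (φ k))‖ ≤ R / ((φ k : ℝ) + 2) := by
        nth_rewrite 1 [hu (φ k)]
        have he1 : (((φ k : ℝ)+1)/((φ k : ℝ)+2)) • g (u (φ k)) - g (u (φ k))
            = ((((φ k : ℝ)+1)/((φ k : ℝ)+2)) - 1) • g (u (φ k)) := by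
          rw [sub_smul, one_smul]
        rw [he1, norm_smul, Real.norm_eq_abs]
        have he2 : (((φ k : ℝ)+1)/((φ k : ℝ)+2)) - 1 = -(1/((φ k : ℝ)+2)) := by
          field_simp
          norm_num
        rw [he2, abs_neg, abs_of_nonneg (by positivity)]
        calc (1/((φ k:ℝ) + 2)) * ‖g (u (φ k))‖ ≤ (1/((φ k:ℝ)+2)) * R :=
            mul_le_mul_of_nonneg_left (hR _) (by positivity)
          _ = R / ((φ k:ℝ)+2) := by ring
      refine le_trans h1 ?_
      have hk : (k : ℝ) ≤ (φ k : ℝ) := by exact_mod_cast hφ.le_apply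
      gcongr
    · have h := (tendsto_const_div_atTop_nhds_zero_nat R).comp (tendsto_add_atTop_nat 2)
      convert h using 2 with k
      simp [Function.comp]
  have hsub : Tendsto (fun k => u (φ k) - g (u (φ k))) atTop (𝓝 (x - g x)) :=
    hconv.sub hgt
  have hxg : x - g x = 0 := tendsto_nhds_unique hsub hdiff
  exact (sub_eq_zero.1 hxg).symm

/-- Coordinatewise clamping into the box `[lo, hi]`. -/
def clampF (lo hi : Fin n → ℝ) (y : Fin n → ℝ) : Fin n → ℝ :=
  fun i => max (lo i) (min (hi i) (y i))

lemma clampF_mem (lo hi y : Fin n → ℝ) (i : Fin n) (h : lo i ≤ hi i) :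
    lo i ≤ clampF lo hi y i ∧ clampF lo hi y i ≤ hi i :=
  ⟨le_max_left _ _, max_le h (min_le_left _ _)⟩

lemma clampF_lip (lo hi : Fin n → ℝ) (y z : Fin n → ℝ) :
    ‖clampF lo hi y - clampF lo hi z‖ ≤ ‖y - z‖ := by
  apply piNormLe (norm_nonneg _)
  intro i
  have h1 : |clampF lo hi y i - clampF lo hi z i| ≤ |y i - z i| := by
    calc |max (lo i) (min (hi i) (y i)) - max (lo i) (min (hi i) (z i))|
        ≤ max |lo i - lo i| |min (hi i) (y i) - min (hi i) (z i)| :=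
          abs_max_sub_max_le_max _ _ _ _
      _ = |min (hi i) (y i) - min (hi i) (z i)| := by
          rw [sub_self, abs_zero]; exact max_eq_right (abs_nonneg _)
      _ ≤ max |hi i - hi i| |y i - z i| := abs_min_sub_min_le_max _ _ _ _
      _ = |y i - z i| := by
          rw [sub_self, abs_zero]; exact max_eq_right (abs_nonneg _)
  calc |(clampF lo hi y - clampF lo hi z) i| = |clampF lo hi y i - clampF lo hi z i| := by
        simp
    _ ≤ |y i - z i| := h1
    _ = |(y - z) i| := by simp
    _ ≤ ‖y - z‖ := coordLe _ i

lemma clampF_eq_self {lo hi y : Fin n → ℝ} (i : Fin n)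
    (h1 : lo i ≤ y i) (h2 : y i ≤ hi i) : clampF lo hi y i = y i := by
  unfold clampF
  rw [min_eq_right h2, max_eq_right h1]

lemma clampF_interior {lo hi y : Fin n → ℝ} {i : Fin n} {b : ℝ}
    (hb : clampF lo hi y i = b) (h1 : lo i < b) (h2 : b < hi i) : y i = b := by
  unfold clampF at hb
  rcases max_cases (lo i) (min (hi i) (y i)) with ⟨h3, h4⟩ | ⟨h3, h4⟩
  · exfalso; rw [h3] at hb; linarith
  · rw [h3] at hb
    rcases min_cases (hi i) (y i) with ⟨h5, h6⟩ | ⟨h5, h6⟩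
    · exfalso; rw [h5] at hb; linarith
    · rw [h5] at hb; exact hb

end Stmt10Aux

open Stmt10Aux in
/-- A sup-norm nonexpansive map `f : ℝⁿ → ℝⁿ` has a nonempty bounded fixed point set iff
for every subset `J` of the coordinates there is `w` with `f(w)_j < w_j` for `j ∈ J` and
`f(w)_j > w_j` for `j ∉ J`. (The norm on `Fin n → ℝ` is the supremum norm.) -/
theorem stmt10 {n : ℕ} (f : (Fin n → ℝ) → (Fin n → ℝ))
    (hf : ∀ x y : Fin n → ℝ, ‖f x - f y‖ ≤ ‖x - y‖) :
    ({x : Fin n → ℝ | f x = x}.Nonempty ∧ Bornology.IsBounded {x : Fin n → ℝ | f x = x}) ↔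
      ∀ J : Finset (Fin n), ∃ w : Fin n → ℝ,
        (∀ j ∈ J, f w j < w j) ∧ ∀ j ∉ J, w j < f w j := by
  constructor
  · rintro ⟨⟨x₀, hx₀⟩, hbdd⟩ J
    have hx₀' : f x₀ = x₀ := hx₀
    obtain ⟨ρ, hρ⟩ := hbdd.subset_closedBall x₀
    set t : ℝ := max ρ 0 + 1 with ht
    have ht0 : 0 < t := by
      have := le_max_right ρ (0:ℝ); rw [ht]; linarith
    set lo : Fin n → ℝ := fun i => x₀ i - t with hlo
    set hi : Fin n → ℝ := fun i => x₀ i + t with hhi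
    set v : Fin n → ℝ := fun i => if i ∈ J then (1:ℝ) else -1 with hv
    have hvle : ∀ i, |v i| ≤ 1 := by
      intro i; by_cases h : i ∈ J <;> simp [hv, h]
    have hlohi : ∀ i, lo i ≤ hi i := by
      intro i; simp only [hlo, hhi]; linarith
    have key : ∀ k : ℕ, ∃ x, clampF lo hi (f x + (1/((k:ℝ)+1)) • v) = x := by
      intro k
      have hlip : LipschitzWith 1 (fun x => clampF lo hi (f x + (1/((k:ℝ)+1)) • v)) := by
        apply LipschitzWith.of_dist_le_mul
        intro x y
        rw [NNReal.coe_one, one_mul, dist_eq_norm, dist_eq_norm]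
        calc ‖clampF lo hi (f x + (1/((k:ℝ)+1)) • v) - clampF lo hi (f y + (1/((k:ℝ)+1)) • v)‖
            ≤ ‖(f x + (1/((k:ℝ)+1)) • v) - (f y + (1/((k:ℝ)+1)) • v)‖ := clampF_lip _ _ _ _
          _ = ‖f x - f y‖ := by congr 1; abel
          _ ≤ ‖x - y‖ := hf x y
      have hbdg : ∀ x, ‖clampF lo hi (f x + (1/((k:ℝ)+1)) • v)‖ ≤ ‖x₀‖ + t := by
        intro x
        apply piNormLe (by positivity)
        intro i
        obtain ⟨hA, hB⟩ := clampF_mem lo hi (f x + (1/((k:ℝ)+1)) • v) i (hlohi i)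
        have h2 := abs_le.1 (coordLe x₀ i)
        rw [abs_le]
        constructor
        · simp only [hlo] at hA; linarith
        · simp only [hhi] at hB; linarith
      exact fp _ hlip _ hbdg
    choose u hu using key
    have humem : ∀ k, u k ∈ closedBall x₀ t := by
      intro k
      rw [mem_closedBall, dist_eq_norm]
      apply piNormLe ht0.le
      intro i
      obtain ⟨hA, hB⟩ := clampF_mem lo hi (f (u k) + (1/((k:ℝ)+1)) • v) i (hlohi i)
      rw [hu k] at hA hB
      rw [abs_le]
      refine ⟨?_, ?_⟩
      · simp only [Pi.sub_apply]; simp only [hlo] at hA; linarith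
      · simp only [Pi.sub_apply]; simp only [hhi] at hB; linarith
    obtain ⟨w0, hw0mem, φ, hφ, hconv⟩ := (isCompact_closedBall x₀ t).tendsto_subseq humem
    have hGlip : LipschitzWith 1 (fun x => clampF lo hi (f x)) := by
      apply LipschitzWith.of_dist_le_mul
      intro x y
      rw [NNReal.coe_one, one_mul, dist_eq_norm, dist_eq_norm]
      exact le_trans (clampF_lip _ _ _ _) (hf x y)
    have hclose : ∀ k : ℕ, ‖u k - clampF lo hi (f (u k))‖ ≤ 1/((k:ℝ)+1) := by
      intro k
      nth_rewrite 1 [← hu k]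
      calc ‖clampF lo hi (f (u k) + (1/((k:ℝ)+1)) • v) - clampF lo hi (f (u k))‖
          ≤ ‖(f (u k) + (1/((k:ℝ)+1)) • v) - f (u k)‖ := clampF_lip _ _ _ _
        _ = ‖(1/((k:ℝ)+1)) • v‖ := by congr 1; abel
        _ ≤ 1/((k:ℝ)+1) := by
            rw [norm_smul, Real.norm_eq_abs, abs_of_nonneg (by positivity)]
            have hv1 : ‖v‖ ≤ 1 := piNormLe zero_le_one hvle
            nlinarith [(by positivity : (0:ℝ) < 1/((k:ℝ)+1))]
    have hG0 : clampF lo hi (f w0) = w0 := by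
      have h1 : Tendsto (fun k => clampF lo hi (f (u (φ k)))) atTop
          (𝓝 (clampF lo hi (f w0))) := (hGlip.continuous.tendsto w0).comp hconv
      have h2 : Tendsto (fun k => u (φ k) - clampF lo hi (f (u (φ k)))) atTop (𝓝 0) := by
        apply squeeze_zero_norm (a := fun k : ℕ => 1/((k:ℝ)+1))
        · intro k
          refine le_trans (hclose (φ k)) ?_
          have hk : (k : ℝ) ≤ (φ k : ℝ) := by exact_mod_cast hφ.le_apply
          gcongr
        · exact tendsto_one_div_add_atTop_nhds_zero_nat
      have h3 : Tendsto (fun k => u (φ k) - clampF lo hi (f (u (φ k)))) atTop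
          (𝓝 (w0 - clampF lo hi (f w0))) := hconv.sub h1
      have h4 := tendsto_nhds_unique h3 h2
      exact (sub_eq_zero.1 h4).symm
    have hfw0 : f w0 = w0 := by
      have hb : ‖f w0 - x₀‖ ≤ t := by
        calc ‖f w0 - x₀‖ = ‖f w0 - f x₀‖ := by rw [hx₀']
          _ ≤ ‖w0 - x₀‖ := hf _ _
          _ ≤ t := by rw [← dist_eq_norm]; exact mem_closedBall.1 hw0mem
      have hcl : clampF lo hi (f w0) = f w0 := by
        funext i
        have h2 := abs_le.1 (le_trans (by simpa using coordLe (f w0 - x₀) i) hb)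
        apply clampF_eq_self
        · simp only [hlo]; linarith [h2.1]
        · simp only [hhi]; linarith [h2.2]
      rw [hcl] at hG0; exact hG0
    have hw0ρ : ‖w0 - x₀‖ ≤ max ρ 0 := by
      have hmem : w0 ∈ closedBall x₀ ρ := hρ hfw0
      rw [mem_closedBall, dist_eq_norm] at hmem
      exact le_trans hmem (le_max_left _ _)
    have htend : Tendsto (fun k => ‖u (φ k) - x₀‖) atTop (𝓝 ‖w0 - x₀‖) :=
      (hconv.sub tendsto_const_nhds).norm
    have hev : ∀ᶠ k in atTop, ‖u (φ k) - x₀‖ < t :=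
      htend.eventually_lt_const (by rw [ht]; linarith)
    obtain ⟨k, hk⟩ := hev.exists
    have hspos : 0 < 1/((φ k : ℝ)+1) := by positivity
    have hcoord : ∀ i, f (u (φ k)) i + (1/((φ k : ℝ)+1)) * v i = u (φ k) i := by
      intro i
      have h1 : |u (φ k) i - x₀ i| < t :=
        lt_of_le_of_lt (by simpa using coordLe (u (φ k) - x₀) i) hk
      have h2 := abs_lt.1 h1
      have h3 := congrFun (hu (φ k)) i
      have h4 := clampF_interior h3 (by simp only [hlo]; linarith [h2.1])
        (by simp only [hhi]; linarith [h2.2])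
      simpa using h4
    refine ⟨u (φ k), fun j hj => ?_, fun j hj => ?_⟩
    · have hc := hcoord j
      have hvj : v j = 1 := by simp [hv, hj]
      rw [hvj] at hc
      linarith
    · have hc := hcoord j
      have hvj : v j = -1 := by simp [hv, hj]
      rw [hvj] at hc
      linarith
  · intro H
    choose W hW1 hW2 using H
    obtain ⟨M₀, hM₀⟩ := Finite.exists_le (fun J : Finset (Fin n) => max ‖W J‖ ‖f (W J)‖)
    set M : ℝ := max M₀ 0 with hM
    have hM0 : (0:ℝ) ≤ M := le_max_right _ _
    have hWM : ∀ J, ‖W J‖ ≤ M :=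
      fun J => le_trans (le_trans (le_max_left _ _) (hM₀ J)) (le_max_left _ _)
    have hfWM : ∀ J, ‖f (W J)‖ ≤ M :=
      fun J => le_trans (le_trans (le_max_right _ _) (hM₀ J)) (le_max_left _ _)
    have hbd : ∀ g : (Fin n → ℝ) → (Fin n → ℝ), (∀ x y, ‖g x - g y‖ ≤ ‖x - y‖) →
        (∀ J, g (W J) = f (W J)) → ∀ x, g x = x → ‖x‖ ≤ 3 * M := by
      intro g hg hgW x hgx
      by_contra hc
      push_neg at hc
      set J : Finset (Fin n) := Finset.univ.filter (fun i => 0 ≤ x i) with hJ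
      refine lemA g hg x (W J) hgx ?_ ?_ ?_
      · intro j hj
        rw [hgW J]
        exact hW1 J j (by simp [hJ, hj])
      · intro j hj
        rw [hgW J]
        exact hW2 J j (by simp [hJ, hj])
      · calc 3 * ‖W J‖ ≤ 3 * M := by linarith [hWM J]
          _ < ‖x‖ := hc
    have hfsub : {x : Fin n → ℝ | f x = x} ⊆ closedBall 0 (3*M) := by
      intro x hx
      rw [mem_closedBall_zero_iff]
      exact hbd f hf (fun J => rfl) x hx
    set R : ℝ := 3 * M + 1 with hR
    set lo : Fin n → ℝ := fun _ => -R with hlo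
    set hi : Fin n → ℝ := fun _ => R with hhi
    have hR0 : (0:ℝ) ≤ R := by rw [hR]; linarith
    have hlohi : ∀ i, lo i ≤ hi i := by intro i; simp only [hlo, hhi]; linarith
    have hgne : ∀ x y, ‖clampF lo hi (f x) - clampF lo hi (f y)‖ ≤ ‖x - y‖ :=
      fun x y => le_trans (clampF_lip _ _ _ _) (hf x y)
    have hgLW : LipschitzWith 1 (fun x => clampF lo hi (f x)) := by
      apply LipschitzWith.of_dist_le_mul
      intro x y
      rw [NNReal.coe_one, one_mul, dist_eq_norm, dist_eq_norm]
      exact hgne x y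
    have hgbd : ∀ x, ‖clampF lo hi (f x)‖ ≤ R := by
      intro x
      apply piNormLe hR0
      intro i
      obtain ⟨hA, hB⟩ := clampF_mem lo hi (f x) i (hlohi i)
      rw [abs_le]
      exact ⟨by simp only [hlo] at hA; linarith, by simp only [hhi] at hB; linarith⟩
    obtain ⟨x, hx⟩ := fp _ hgLW _ hgbd
    have hgW : ∀ J, clampF lo hi (f (W J)) = f (W J) := by
      intro J
      funext i
      have h1 := abs_le.1 (le_trans (coordLe (f (W J)) i) (hfWM J))
      apply clampF_eq_self
      · simp only [hlo]; rw [hR]; linarith [h1.1]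
      · simp only [hhi]; rw [hR]; linarith [h1.2]
    have hxb : ‖x‖ ≤ 3 * M := hbd _ hgne hgW x hx
    have hfx : f x = x := by
      funext i
      have h2 := abs_le.1 (le_trans (coordLe x i) hxb)
      exact clampF_interior (congrFun hx i)
        (by simp only [hlo]; rw [hR]; linarith [h2.1])
        (by simp only [hhi]; rw [hR]; linarith [h2.2])
    exact ⟨⟨x, hfx⟩, isBounded_closedBall.subset hfsub⟩
end

section
/- Let f : V → V be a nonexpansive map on a finite dimensional real normed space (V,‖·‖) whose norm is smooth, i.e., each unit vector has a unique norming functional of dual norm one. Then there exist finitely many points w₁, …, w_m ∈ V such that 0 lies in the interior of the convex hull of {f(w_i) − w_i : i = 1, …, m} if and only if Fix(f) = {x : f(x) = x} is nonempty and bounded. -/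
/-!
If `0` is interior to the convex hull of the displacements `f wᵢ - wᵢ`, no point `x` with
`f x = c • x` for some `c ≥ 1` can be far out: a norming functional `φ` of `x - wᵢ` satisfies
`φ (f wᵢ - wᵢ) ≥ 0` by nonexpansiveness, and when `x → ∞` in a direction `u`, the norming
functionals of all the `x - wᵢ` converge, by smoothness, to the unique norming functional of `u`,
which would then be nonnegative on a set whose hull contains a neighbourhood of `0`. This bounds
the fixed points of `f`, and also those of the contractions `c⁻¹ • f`, which accumulate at a fixed
point of `f` as `c → 1`.

Conversely, if no finite family works, then `0` is not interior to the hull of all displacements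
(in finite dimension an interior point of a hull is interior to the hull of finitely many of the
points), so some `φ ≠ 0` satisfies `φ (f x) ≤ φ x`. For a fixed point `p`, `f` then maps each
compact convex set `{x | ‖x - p‖ ≤ r, φ x ≤ c}` into itself and has a fixed point there, so `φ`
is unbounded below on the fixed points.
-/

open Set Filter Topology Metric Bornology

section ConvexHull

variable {E : Type*} [NormedAddCommGroup E] [NormedSpace ℝ E] [FiniteDimensional ℝ E]

theorem exists_fin_mem_interior_convexHull_range_comp {α : Type*} {g : α → E} {x : E}
    (hx : x ∈ interior (convexHull ℝ (range g))) :
    ∃ (m : ℕ) (w : Fin m → α), x ∈ interior (convexHull ℝ (range (g ∘ w))) := by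
  obtain ⟨b, hxb, hb⟩ :=
    exists_mem_interior_convexHull_affineBasis (mem_interior_iff_mem_nhds.1 hx)
  have hbt (i) : ∃ t : Finset E, ↑t ⊆ range g ∧ b i ∈ convexHull ℝ (t : Set E) := by
    have := hb (subset_convexHull ℝ _ (mem_range_self i))
    rw [convexHull_eq_union_convexHull_finite_subsets] at this
    simpa using this
  choose t htg hbt using hbt
  obtain ⟨m, v, -, hv⟩ := (finite_iUnion fun i => (t i).finite_toSet).fin_param
  have hvg (j) : ∃ a, g a = v j := iUnion_subset htg (hv ▸ mem_range_self j)
  choose w hw using hvg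
  have hgw : range (g ∘ w) = ⋃ i, (t i : Set E) := by rw [← hv]; congr; exact funext hw
  refine ⟨m, w, interior_mono (convexHull_min ?_ (convex_convexHull ℝ _)) hxb⟩
  rintro _ ⟨i, rfl⟩
  exact hgw ▸ convexHull_mono (subset_iUnion (fun i => (t i : Set E)) i) (hbt i)

theorem Convex.exists_ne_zero_forall_apply_le_of_notMem_interior {C : Set E}
    (hC : Convex ℝ C) (hne : C.Nonempty) {x : E} (hx : x ∉ interior C) :
    ∃ φ : StrongDual ℝ E, φ ≠ 0 ∧ ∀ a ∈ C, φ a ≤ φ x := by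
  by_cases hint : (interior C).Nonempty
  · exact geometric_hahn_banach_of_nonempty_interior_point hC hx hint
  obtain ⟨p, hp⟩ := hne
  have hdir : (affineSpan ℝ C).direction < ⊤ := by
    refine lt_top_iff_ne_top.2 fun htop => hint ?_
    rw [← hC.convexHull_eq, interior_convexHull_nonempty_iff_affineSpan_eq_top]
    exact (AffineSubspace.direction_eq_top_iff_of_nonempty ⟨p, subset_affineSpan ℝ C hp⟩).1 htop
  obtain ⟨g, hg, hker⟩ := Submodule.exists_le_ker_of_lt_top _ hdir
  have hconst : ∀ a ∈ C, g a = g p := fun a ha => by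
    simpa [sub_eq_zero] using hker (AffineSubspace.vsub_mem_direction
      (subset_affineSpan ℝ C ha) (subset_affineSpan ℝ C hp))
  rcases le_total (g p) (g x) with h | h
  · exact ⟨LinearMap.toContinuousLinearMap g, by simpa using hg,
      fun a ha => by simpa [hconst a ha]⟩
  · exact ⟨-LinearMap.toContinuousLinearMap g, by simpa using hg,
      fun a ha => by simpa [hconst a ha]⟩

end ConvexHull

theorem StrongDual.exists_apply_neg_of_zero_mem_interior_convexHull {E : Type*}
    [NormedAddCommGroup E] [NormedSpace ℝ E] {s : Set E}
    (hs : (0 : E) ∈ interior (convexHull ℝ s)) {φ : StrongDual ℝ E} (hφ : φ ≠ 0) :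
    ∃ a ∈ s, φ a < 0 := by
  by_contra! h
  have hhull : convexHull ℝ s ⊆ φ ⁻¹' Ici 0 :=
    convexHull_min h (convex_halfSpace_ge φ.toLinearMap.isLinear 0)
  have := interior_mono hhull hs
  rw [← (φ.isOpenMap_of_ne_zero hφ).preimage_interior_eq_interior_preimage φ.continuous,
    interior_Ici] at this
  simp at this

theorem exists_fixedPoint_of_tendsto_dist {X : Type*} [MetricSpace X] {f : X → X}
    (hf : Continuous f) {K : Set X} (hK : IsCompact K) {x : ℕ → X} (hxK : ∀ n, x n ∈ K)
    (h : Tendsto (fun n => dist (f (x n)) (x n)) atTop (𝓝 0)) : ∃ a ∈ K, f a = a := by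
  obtain ⟨a, haK, σ, hσ, hlim⟩ := hK.tendsto_subseq hxK
  exact ⟨a, haK, dist_eq_zero.1 <|
    tendsto_nhds_unique (((hf.tendsto a).comp hlim).dist hlim) (h.comp hσ.tendsto_atTop)⟩

section Nonexpansive

variable {V : Type*} [NormedAddCommGroup V] [NormedSpace ℝ V] {f : V → V}

theorem LipschitzWith.exists_mem_add_smul_sub_eq (hf : LipschitzWith 1 f) {K : Set V}
    (hK : IsComplete K) (hKc : Convex ℝ K) (hKf : MapsTo f K K) {q : V} (hq : q ∈ K)
    {t : ℝ} (ht₀ : 0 ≤ t) (ht₁ : t < 1) : ∃ x ∈ K, q + t • (f x - q) = x := by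
  have hmaps : MapsTo (fun x => q + t • (f x - q)) K K := fun x hx =>
    hKc.add_smul_sub_mem hq (hKf hx) ⟨ht₀, ht₁.le⟩
  have hcontr : ContractingWith ⟨t, ht₀⟩ (hmaps.restrict _ K K) := by
    refine ⟨ht₁, LipschitzWith.of_dist_le_mul fun x y => ?_⟩
    change dist (q + t • (f x - q)) (q + t • (f y - q)) ≤ t * dist (x : V) y
    rw [dist_add_left, dist_smul₀, dist_sub_right, Real.norm_of_nonneg ht₀]
    gcongr
    simpa using hf.dist_le_mul x y
  obtain ⟨x, hxK, hx, -⟩ := hcontr.exists_fixedPoint' hK hmaps hq (edist_ne_top _ _)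
  exact ⟨x, hxK, hx⟩

theorem LipschitzWith.exists_fixedPoint_of_isCompact_of_convex
    (hf : LipschitzWith 1 f) {K : Set V} (hK : IsCompact K) (hKc : Convex ℝ K)
    (hne : K.Nonempty) (hKf : MapsTo f K K) : ∃ x ∈ K, f x = x := by
  obtain ⟨q, hq⟩ := hne
  have approx (n : ℕ) : ∃ x ∈ K, q + (1 - 1 / ((n : ℝ) + 1)) • (f x - q) = x :=
    hf.exists_mem_add_smul_sub_eq hK.isComplete hKc hKf hq
      (sub_nonneg.2 (div_le_one_of_le₀ (by simp) (by positivity))) (by simp; positivity)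
  choose x hxK hx using approx
  refine exists_fixedPoint_of_tendsto_dist hf.continuous hK hxK <|
    squeeze_zero (g := fun n : ℕ => 1 / ((n : ℝ) + 1) * diam K) (fun n => dist_nonneg)
      (fun n => ?_) (by simpa using tendsto_one_div_add_atTop_nhds_zero_nat.mul_const (diam K))
  calc dist (f (x n)) (x n) = ‖(1 / ((n : ℝ) + 1)) • (f (x n) - q)‖ := by
        rw [dist_eq_norm]; nth_rw 2 [← hx n]; congr 1; module
    _ ≤ 1 / ((n : ℝ) + 1) * diam K := by
        rw [norm_smul, ← dist_eq_norm, Real.norm_of_nonneg (by positivity)]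
        gcongr
        exact dist_le_diam_of_mem hK.isBounded (hKf (hxK n)) hq

variable [FiniteDimensional ℝ V]

theorem LipschitzWith.exists_fixedPoint_of_isBounded_setOf_eq_smul
    (hf : LipschitzWith 1 f) (hb : IsBounded {x | ∃ c : ℝ, 1 ≤ c ∧ f x = c • x}) :
    ∃ x, f x = x := by
  obtain ⟨R, hR⟩ := hb.subset_closedBall 0
  have approx (n : ℕ) : ∃ x, f x = (1 + 1 / ((n : ℝ) + 1)) • x := by
    have hc : 1 < 1 + 1 / ((n : ℝ) + 1) := by simp; positivity
    obtain ⟨x, -, hx⟩ := hf.exists_mem_add_smul_sub_eq isComplete_univ convex_univ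
      (mapsTo_univ _ _) (mem_univ 0) (inv_nonneg.2 (by linarith)) (inv_lt_one_of_one_lt₀ hc)
    rw [zero_add, sub_zero] at hx
    refine ⟨x, ?_⟩
    conv_rhs => rw [← hx, smul_inv_smul₀ (by positivity)]
  choose x hx using approx
  have hxR (n : ℕ) : ‖x n‖ ≤ R := by
    simpa using hR ⟨_, by simp; positivity, hx n⟩
  have hdist : Tendsto (fun n => dist (f (x n)) (x n)) atTop (𝓝 0) := by
    refine squeeze_zero (g := fun n : ℕ => 1 / ((n : ℝ) + 1) * R) (fun n => dist_nonneg)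
      (fun n => ?_) (by simpa using tendsto_one_div_add_atTop_nhds_zero_nat.mul_const R)
    calc dist (f (x n)) (x n) = 1 / ((n : ℝ) + 1) * ‖x n‖ := by
          rw [dist_eq_norm, hx n, add_smul, one_smul, add_sub_cancel_left, norm_smul,
            Real.norm_of_nonneg (by positivity)]
      _ ≤ 1 / ((n : ℝ) + 1) * R := by gcongr; exact hxR n
  obtain ⟨a, -, ha⟩ := exists_fixedPoint_of_tendsto_dist hf.continuous
    (isCompact_closedBall (0 : V) R) (fun n => by simpa using hxR n) hdist
  exact ⟨a, ha⟩

theorem LipschitzWith.exists_fixedPoint_apply_le (hf : LipschitzWith 1 f)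
    {φ : StrongDual ℝ V} (hφ : ∀ x, φ (f x) ≤ φ x) {p : V} (hp : f p = p) (y : V) :
    ∃ x, f x = x ∧ φ x ≤ φ y := by
  have hmaps : MapsTo f (closedBall p (dist y p) ∩ {x | φ x ≤ φ y})
      (closedBall p (dist y p) ∩ {x | φ x ≤ φ y}) := fun x hx =>
    ⟨le_trans (by simpa [hp] using hf.dist_le_mul x p) hx.1, (hφ x).trans hx.2⟩
  obtain ⟨x, hxK, hx⟩ := hf.exists_fixedPoint_of_isCompact_of_convex
    ((isCompact_closedBall p _).inter_right (isClosed_le φ.continuous continuous_const))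
    ((convex_closedBall p _).inter (convex_halfSpace_le φ.toLinearMap.isLinear _))
    ⟨y, by simp⟩ hmaps
  exact ⟨x, hx, hxK.2⟩

theorem LipschitzWith.not_isBounded_setOf_fixed (hf : LipschitzWith 1 f)
    {φ : StrongDual ℝ V} (hφ₀ : φ ≠ 0) (hφ : ∀ x, φ (f x) ≤ φ x) {p : V} (hp : f p = p) :
    ¬ IsBounded {x | f x = x} := by
  intro hb
  obtain ⟨c, hc⟩ := (φ.lipschitz.isBounded_image hb).bddBelow
  obtain ⟨y, hy⟩ := LinearMap.surjective (f := φ.toLinearMap)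
    (ContinuousLinearMap.coe_injective.ne hφ₀) (c - 1)
  obtain ⟨x, hx, hxy⟩ := hf.exists_fixedPoint_apply_le hφ hp y
  have := hc ⟨x, hx, rfl⟩
  simp only [ContinuousLinearMap.coe_coe] at hy
  linarith

end Nonexpansive

section Smooth

variable {V : Type*} [NormedAddCommGroup V] [NormedSpace ℝ V]

theorem StrongDual.norm_sub_two_mul_norm_le_apply {φ : StrongDual ℝ V} (hφ : ‖φ‖ ≤ 1)
    {x w : V} (hφw : φ (x - w) = ‖x - w‖) : ‖x‖ - 2 * ‖w‖ ≤ φ x := by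
  have h₁ : |φ w| ≤ ‖w‖ := by simpa using φ.le_of_opNorm_le hφ w
  have h₂ := norm_sub_norm_le x w
  rw [map_sub] at hφw
  linarith [neg_abs_le (φ w)]

theorem LipschitzWith.apply_sub_nonneg_of_eq_smul {f : V → V} (hf : LipschitzWith 1 f)
    {c : ℝ} (hc : 1 ≤ c) {x : V} (hx : f x = c • x) {φ : StrongDual ℝ V} (hφ : ‖φ‖ ≤ 1)
    {w : V} (hφw : φ (x - w) = ‖x - w‖) (hφx : 0 ≤ φ x) : 0 ≤ φ (f w - w) := by
  have h : φ (f x - f w) ≤ φ (x - w) := calc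
    φ (f x - f w) ≤ ‖f x - f w‖ :=
      (le_abs_self _).trans (by simpa using φ.le_of_opNorm_le hφ (f x - f w))
    _ ≤ ‖x - w‖ := by simpa using hf.norm_sub_le x w
    _ = φ (x - w) := hφw.symm
  simp only [map_sub, hx, map_smul, smul_eq_mul] at h ⊢
  nlinarith [mul_nonneg (sub_nonneg.2 hc) hφx]

variable [FiniteDimensional ℝ V]

theorem isBounded_setOf_forall_exists_norming_nonneg
    (hsmooth : ∀ z : V, ‖z‖ = 1 → ∃! φ : StrongDual ℝ V, ‖φ‖ = 1 ∧ φ z = 1)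
    {ι : Type*} [Finite ι] (w d : ι → V) (hd : (0 : V) ∈ interior (convexHull ℝ (range d))) :
    IsBounded
      {x | ∀ i, ∃ φ : StrongDual ℝ V, ‖φ‖ ≤ 1 ∧ φ (x - w i) = ‖x - w i‖ ∧ 0 ≤ φ (d i)} := by
  rw [isBounded_iff_forall_norm_le]
  by_contra! h
  choose X hXS hX using fun n : ℕ => h n
  choose Φ hΦ hΦX hΦd using hXS
  have hXpos (n : ℕ) : 0 < ‖X n‖ := (Nat.cast_nonneg n).trans_lt (hX n)
  obtain ⟨⟨u, Ψ⟩, ⟨hu, hΨ⟩, σ, hσ, hlim⟩ :=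
    ((isCompact_sphere (0 : V) 1).prod (isCompact_univ_pi fun _ : ι =>
      isCompact_closedBall (0 : StrongDual ℝ V) 1)).tendsto_subseq
      (x := fun n => (‖X n‖⁻¹ • X n, Φ n))
      (fun n => ⟨by simp [norm_smul, (hXpos n).ne'], fun i _ => by simpa using hΦ n i⟩)
  rw [mem_sphere_zero_iff_norm] at hu
  have hΨ₁ (i : ι) : ‖Ψ i‖ ≤ 1 := by simpa using hΨ i (mem_univ i)
  have hΨlim (i : ι) {y : ℕ → V} {b : V} (hy : Tendsto y atTop (𝓝 b)) :
      Tendsto (fun n => Φ (σ n) i (y n)) atTop (𝓝 (Ψ i b)) :=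
    ((continuous_fst.clm_apply continuous_snd).tendsto (Ψ i, b)).comp
      ((((continuous_apply i).tendsto _).comp ((continuous_snd.tendsto _).comp hlim)).prodMk_nhds
        hy)
  have hΨu (i : ι) : Ψ i u = 1 := by
    refine le_antisymm
      (by simpa [hu] using (le_abs_self _).trans ((Ψ i).le_of_opNorm_le (hΨ₁ i) u))
      (le_of_tendsto_of_tendsto (f := fun n => 1 - 2 * ‖w i‖ * ‖X (σ n)‖⁻¹) ?_
        (hΨlim i ((continuous_fst.tendsto _).comp hlim)) (Eventually.of_forall fun n => ?_))
    · simpa using (((tendsto_atTop_mono (fun n => (hX n).le) tendsto_natCast_atTop_atTop).comp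
        hσ.tendsto_atTop).inv_tendsto_atTop.const_mul (2 * ‖w i‖)).const_sub 1
    · have := StrongDual.norm_sub_two_mul_norm_le_apply (hΦ (σ n) i) (hΦX (σ n) i)
      have hpos := hXpos (σ n)
      simp only [Function.comp_apply, map_smul, smul_eq_mul]
      rw [show 1 - 2 * ‖w i‖ * ‖X (σ n)‖⁻¹ = ‖X (σ n)‖⁻¹ * (‖X (σ n)‖ - 2 * ‖w i‖) by
        field_simp]
      gcongr
  obtain ⟨φ, ⟨-, hφu⟩, huniq⟩ := hsmooth u hu
  have hΨφ (i : ι) : Ψ i = φ :=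
    huniq _ ⟨le_antisymm (hΨ₁ i) (by simpa [hu, hΨu i] using (Ψ i).le_opNorm u), hΨu i⟩
  obtain ⟨_, ⟨i, rfl⟩, hi⟩ := StrongDual.exists_apply_neg_of_zero_mem_interior_convexHull hd
    (φ := φ) (fun h => by simp [h] at hφu)
  exact hi.not_ge (hΨφ i ▸ ge_of_tendsto' (hΨlim i tendsto_const_nhds) fun n => hΦd (σ n) i)

theorem LipschitzWith.isBounded_setOf_eq_smul
    (hsmooth : ∀ z : V, ‖z‖ = 1 → ∃! φ : StrongDual ℝ V, ‖φ‖ = 1 ∧ φ z = 1)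
    {f : V → V} (hf : LipschitzWith 1 f) {ι : Type*} [Finite ι] (w : ι → V)
    (hw : (0 : V) ∈ interior (convexHull ℝ (range fun i => f (w i) - w i))) :
    IsBounded {x | ∃ c : ℝ, 1 ≤ c ∧ f x = c • x} := by
  obtain ⟨C, hC⟩ := (finite_range w).isBounded.exists_norm_le
  refine ((isBounded_setOf_forall_exists_norming_nonneg hsmooth w _ hw).union
    (isBounded_closedBall (x := 0) (r := 2 * C))).subset fun x ⟨c, hc, hx⟩ => ?_
  by_cases hxC : ‖x‖ ≤ 2 * C
  · exact Or.inr (by simpa using hxC)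
  refine Or.inl fun i => ?_
  obtain ⟨φ, hφ, hφx⟩ := exists_dual_vector'' ℝ (x - w i)
  replace hφx : φ (x - w i) = ‖x - w i‖ := hφx
  have hwi := hC _ (mem_range_self i)
  exact ⟨φ, hφ, hφx, hf.apply_sub_nonneg_of_eq_smul hc hx hφ hφx
    (by linarith [StrongDual.norm_sub_two_mul_norm_le_apply hφ hφx])⟩

end Smooth

/-- For a nonexpansive map `f` on a finite dimensional real normed space with a smooth
norm, there are finitely many points `wᵢ` with `0` in the interior of the convex hull of
`{f(wᵢ) - wᵢ}` iff the fixed point set of `f` is nonempty and bounded. -/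
theorem stmt12 {V : Type*} [NormedAddCommGroup V] [NormedSpace ℝ V] [FiniteDimensional ℝ V]
    (hsmooth : ∀ z : V, ‖z‖ = 1 → ∃! φ : V →L[ℝ] ℝ, ‖φ‖ = 1 ∧ φ z = 1)
    (f : V → V) (hf : ∀ x y : V, ‖f x - f y‖ ≤ ‖x - y‖) :
    (∃ (m : ℕ) (w : Fin m → V),
      (0 : V) ∈ interior (convexHull ℝ (Set.range (fun i => f (w i) - w i)))) ↔
      ({x : V | f x = x}.Nonempty ∧ Bornology.IsBounded {x : V | f x = x}) := by
  have hf : LipschitzWith 1 f := .of_dist_le_mul fun x y => by simpa [dist_eq_norm] using hf x y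
  constructor
  · rintro ⟨m, w, hw⟩
    have hb := hf.isBounded_setOf_eq_smul hsmooth w hw
    exact ⟨hf.exists_fixedPoint_of_isBounded_setOf_eq_smul hb,
      hb.subset fun x hx => ⟨1, le_rfl, by simpa using hx⟩⟩
  · rintro ⟨⟨p, hp⟩, hb⟩
    by_contra hw
    have h0 : (0 : V) ∉ interior (convexHull ℝ (range fun x => f x - x)) := fun h =>
      have ⟨m, w, hmw⟩ := exists_fin_mem_interior_convexHull_range_comp h
      hw ⟨m, w, hmw⟩
    obtain ⟨φ, hφ₀, hφ⟩ := (convex_convexHull ℝ (range fun x => f x - x))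
      |>.exists_ne_zero_forall_apply_le_of_notMem_interior (range_nonempty _).convexHull h0
    refine hf.not_isBounded_setOf_fixed hφ₀ (fun x => ?_) hp hb
    simpa using hφ _ (subset_convexHull ℝ _ (mem_range_self (f := fun x => f x - x) x))
end

section
/- Let f : V → V be a nonexpansive map on a finite dimensional real normed space (V,‖·‖) with closed unit ball B₁, and suppose w₁, …, w_m ∈ V are such that {f(w_i) − w_i : i = 1, …, m} illuminates B₁. Let p ∈ V and R₀ ≥ 0 satisfy ‖w_i − p‖ ≤ R₀ for all i, and let δ > 0 be such that for every z with ‖z‖ = 1 there is an index i with ‖z − y‖ ≥ δ for every y with ‖y‖ = 1 that is not illuminated by f(w_i) − w_i. Then every fixed point x of f satisfies ‖x − p‖ ≤ ((2 + δ)/δ) R₀. -/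
/-- Localization of the fixed point set: if `{f(wᵢ) - wᵢ}` illuminates the unit ball,
`‖wᵢ - p‖ ≤ R₀` for all `i`, and `δ > 0` is such that every unit vector `z` admits an
index `i` with `‖z - y‖ ≥ δ` for every unit vector `y` not illuminated by `f(wᵢ) - wᵢ`,
then every fixed point `x` of `f` satisfies `‖x - p‖ ≤ ((2 + δ)/δ) R₀`. -/
theorem stmt17 {V : Type*} [NormedAddCommGroup V] [NormedSpace ℝ V] [FiniteDimensional ℝ V]
    (f : V → V) (hf : ∀ x y : V, ‖f x - f y‖ ≤ ‖x - y‖)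
    (m : ℕ) (w : Fin m → V)
    (hillum : Illuminates {v : V | ∃ i, v = f (w i) - w i} (Metric.closedBall 0 1))
    (p : V) (R₀ : ℝ) (hR₀ : 0 ≤ R₀) (hwp : ∀ i, ‖w i - p‖ ≤ R₀)
    (δ : ℝ) (hδ : 0 < δ)
    (hδ2 : ∀ z : V, ‖z‖ = 1 → ∃ i : Fin m, ∀ y : V, ‖y‖ = 1 →
      ¬ (∃ l : ℝ, 0 < l ∧ y + l • (f (w i) - w i) ∈ interior (Metric.closedBall (0 : V) 1)) →
      δ ≤ ‖z - y‖) :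
    ∀ x : V, f x = x → ‖x - p‖ ≤ ((2 + δ) / δ) * R₀ := by
  intro x hx
  by_contra hcon
  push_neg at hcon
  set R : ℝ := ‖x - p‖ with hRdef
  -- R₀ < R, R > 0
  have hfrac : R₀ ≤ (2 + δ) / δ * R₀ := by
    have h1 : (1 : ℝ) ≤ (2 + δ) / δ := by
      rw [le_div_iff₀ hδ]; linarith
    nlinarith
  have hR0R : R₀ < R := lt_of_le_of_lt hfrac hcon
  have hRpos : 0 < R := lt_of_le_of_lt hR₀ hR0R
  set z : V := R⁻¹ • (x - p) with hzdef
  have hz : ‖z‖ = 1 := by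
    rw [hzdef, norm_smul, Real.norm_eq_abs, abs_of_pos (inv_pos.2 hRpos), ← hRdef]
    field_simp
  obtain ⟨i, hi⟩ := hδ2 z hz
  set r : ℝ := ‖x - w i‖ with hrdef
  have hr_lb : R - R₀ ≤ r := by
    have h1 : ‖x - p‖ ≤ ‖x - w i‖ + ‖w i - p‖ := by
      calc ‖x - p‖ = ‖(x - w i) + (w i - p)‖ := by rw [sub_add_sub_cancel]
        _ ≤ ‖x - w i‖ + ‖w i - p‖ := norm_add_le _ _
    have := hwp i
    simp only [← hRdef, ← hrdef] at h1
    linarith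
  have hrpos : 0 < r := by linarith
  set y : V := r⁻¹ • (x - w i) with hydef
  have hy : ‖y‖ = 1 := by
    rw [hydef, norm_smul, Real.norm_eq_abs, abs_of_pos (inv_pos.2 hrpos), ← hrdef]
    field_simp
  set v : V := f (w i) - w i with hvdef
  -- y is not illuminated by v
  have hni : ¬ (∃ l : ℝ, 0 < l ∧ y + l • v ∈ interior (Metric.closedBall (0 : V) 1)) := by
    rintro ⟨l, hl, hmem⟩
    rw [interior_closedBall (0 : V) one_ne_zero, Metric.mem_ball, dist_zero_right] at hmem
    set a : V := x - w i with hadef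
    have ha : ‖a‖ = r := rfl
    set t : ℝ := l * r with htdef
    have htpos : 0 < t := mul_pos hl hrpos
    -- ‖a + t • v‖ < r
    have hscale : ‖a + t • v‖ < r := by
      have heq : a + t • v = r • (y + l • v) := by
        rw [hydef, htdef]
        rw [smul_add, smul_smul, smul_smul, mul_inv_cancel₀ hrpos.ne', one_smul, mul_comm l r]
      rw [heq, norm_smul, Real.norm_eq_abs, abs_of_pos hrpos]
      calc r * ‖y + l • v‖ < r * 1 := by
            exact mul_lt_mul_of_pos_left hmem hrpos
        _ = r := mul_one r
    -- ‖a - v‖ ≤ r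
    have hav : ‖a - v‖ ≤ r := by
      have h1 := hf (w i) x
      rw [hx] at h1
      have h2 : a - v = x - f (w i) := by rw [hadef, hvdef]; abel
      rw [h2, norm_sub_rev]
      rw [norm_sub_rev (w i) x] at h1
      exact h1
    -- convexity contradiction
    have key : (1 + t) • a = t • (a - v) + (a + t • v) := by module
    have h1 : ‖(1 + t) • a‖ ≤ t * ‖a - v‖ + ‖a + t • v‖ := by
      rw [key]
      refine (norm_add_le _ _).trans ?_
      rw [norm_smul, Real.norm_eq_abs, abs_of_pos htpos]
    rw [norm_smul, Real.norm_eq_abs, abs_of_pos (by linarith : (0:ℝ) < 1 + t), ha] at h1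
    nlinarith
  have hδy := hi y hy hni
  -- but ‖z - y‖ ≤ 2 R₀ / R < δ
  have hdecomp : z - y = R⁻¹ • (w i - p) + (R⁻¹ - r⁻¹) • (x - w i) := by
    rw [hzdef, hydef]; module
  have h2 : ‖z - y‖ ≤ R⁻¹ * ‖w i - p‖ + |R⁻¹ - r⁻¹| * r := by
    rw [hdecomp]
    refine (norm_add_le _ _).trans ?_
    rw [norm_smul, norm_smul, Real.norm_eq_abs, Real.norm_eq_abs,
      abs_of_pos (inv_pos.2 hRpos)]
  have h3 : |R⁻¹ - r⁻¹| * r ≤ R₀ / R := by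
    have hdiff : R⁻¹ - r⁻¹ = (r - R) / (R * r) := by field_simp
    rw [hdiff, abs_div, abs_of_pos (mul_pos hRpos hrpos)]
    have habs : |r - R| ≤ R₀ := by
      have h4 := abs_norm_sub_norm_le (x - w i) (x - p)
      have h5 : (x - w i) - (x - p) = p - w i := by abel
      rw [h5, ← hrdef, ← hRdef, norm_sub_rev] at h4
      exact h4.trans (hwp i)
    rw [div_mul_eq_mul_div, div_le_div_iff₀ (mul_pos hRpos hrpos) hRpos]
    calc |r - R| * r * R = (|r - R| * R) * r := by ring
      _ ≤ (R₀ * R) * r := by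
          have : |r - R| * R ≤ R₀ * R := mul_le_mul_of_nonneg_right habs hRpos.le
          exact mul_le_mul_of_nonneg_right this hrpos.le
      _ = R₀ * (R * r) := by ring
  have h6 : R⁻¹ * ‖w i - p‖ ≤ R₀ / R := by
    rw [div_eq_inv_mul]
    exact mul_le_mul_of_nonneg_left (hwp i) (inv_pos.2 hRpos).le
  have h7 : δ ≤ (R₀ + R₀) / R := by
    rw [add_div]; linarith
  -- contradiction with hcon : (2+δ)/δ * R₀ < R
  have h8 : δ * R ≤ 2 * R₀ := by
    rw [le_div_iff₀ hRpos] at h7; linarith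
  have h9 : (2 + δ) * R₀ < δ * R := by
    rw [div_mul_eq_mul_div, div_lt_iff₀ hδ] at hcon; linarith
  nlinarith
end

section
/- Let V be a real inner product space and let f : V → V be nonexpansive with respect to the induced norm. Then: (a) every fixed point x of f satisfies ⟨x, w − f(w)⟩ ≤ ⟨w, w − f(w)⟩ for every w ∈ V; in particular Fix(f) ⊆ ⋂_{w ∈ V} H_w, where H_w = {v ∈ V : ⟨v, w − f(w)⟩ ≤ ⟨w, w − f(w)⟩}. (b) If moreover V is finite dimensional and there exist w₁, …, w_m ∈ V such that {f(w_i) − w_i : i = 1, …, m} illuminates the closed unit ball of V, then ⋂_{i=1}^m H_{w_i} is compact. -/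
/-!
(a) If `x` is a fixed point, then `‖f w - x‖ ≤ ‖w - x‖`, and the polarization identity
`2⟪w - x, w - f w⟫ = ‖w - x‖² + ‖w - f w‖² - ‖f w - x‖²` makes the left side nonnegative.

(b) A direction `d` illuminates a unit vector `u` only if `⟪u, d⟫ < 0`, so every unit vector
has positive inner product with some `aᵢ = wᵢ - f wᵢ`. By compactness of the sphere this holds
with a uniform lower bound `ε > 0`, which forces `ε ‖v‖ ≤ ⟪wᵢ, aᵢ⟫` for some `i` on the
intersection of the half-spaces; being closed and bounded, the intersection is compact.
-/

open Bornology Metric Set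

open scoped RealInnerProductSpace

section

variable {V : Type*} [NormedAddCommGroup V] [InnerProductSpace ℝ V]

theorem inner_sub_sub_nonneg_of_norm_sub_le {x y a : V} (h : ‖y - a‖ ≤ ‖x - a‖) :
    0 ≤ ⟪x - a, x - y⟫ := by
  have hsq : ‖y - a‖ ^ 2 ≤ ‖x - a‖ ^ 2 := pow_le_pow_left₀ (norm_nonneg _) h 2
  have hpol := norm_sub_sq_real (x - a) (x - y)
  rw [sub_sub_sub_cancel_left] at hpol
  nlinarith [sq_nonneg ‖x - y‖]

theorem inner_neg_of_add_smul_mem_ball {u d : V} {l : ℝ} (hu : ‖u‖ = 1) (hl : 0 < l)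
    (h : u + l • d ∈ ball (0 : V) 1) : ⟪u, d⟫ < 0 := by
  rw [mem_ball_zero_iff] at h
  have hsq : ‖u + l • d‖ ^ 2 < 1 := by nlinarith [norm_nonneg (u + l • d)]
  rw [norm_add_sq_real, inner_smul_right, norm_smul, Real.norm_of_nonneg hl.le, hu] at hsq
  nlinarith [sq_nonneg (l * ‖d‖)]

theorem exists_pos_forall_sphere_exists_le_inner [ProperSpace V] {ι : Type*} [Fintype ι]
    (a : ι → V) (h : ∀ u ∈ sphere (0 : V) 1, ∃ i, 0 < ⟪u, a i⟫) :
    ∃ ε > 0, ∀ u ∈ sphere (0 : V) 1, ∃ i, ε ≤ ⟪u, a i⟫ := by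
  rcases (sphere (0 : V) 1).eq_empty_or_nonempty with hs | ⟨u₁, hu₁⟩
  · exact ⟨1, one_pos, by simp [hs]⟩
  obtain ⟨i₁, -⟩ := h u₁ hu₁
  have hι : (Finset.univ : Finset ι).Nonempty := ⟨i₁, Finset.mem_univ _⟩
  set g : V → ℝ := fun u => Finset.univ.sup' hι fun i => ⟪u, a i⟫
  have hg : Continuous g := Continuous.finset_sup'_apply hι fun i _ => by fun_prop
  obtain ⟨u₀, hu₀, hmin⟩ := (isCompact_sphere (0 : V) 1).exists_isMinOn ⟨u₁, hu₁⟩ hg.continuousOn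
  refine ⟨g u₀, ?_, fun u hu => ?_⟩
  · obtain ⟨i, hi⟩ := h u₀ hu₀
    exact hi.trans_le (Finset.le_sup' (fun i => ⟪u₀, a i⟫) (Finset.mem_univ i))
  · obtain ⟨i, -, hi⟩ := Finset.exists_mem_eq_sup' hι fun i => ⟪u, a i⟫
    exact ⟨i, (hmin hu).trans hi.le⟩

theorem isBounded_iInter_setOf_inner_le [ProperSpace V] {ι : Type*} [Fintype ι]
    (a : ι → V) (c : ι → ℝ) (h : ∀ u ∈ sphere (0 : V) 1, ∃ i, 0 < ⟪u, a i⟫) :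
    IsBounded (⋂ i, {v : V | ⟪v, a i⟫ ≤ c i}) := by
  obtain ⟨ε, hε, hεa⟩ := exists_pos_forall_sphere_exists_le_inner a h
  rw [isBounded_iff_forall_norm_le]
  refine ⟨(∑ i, |c i|) / ε, fun v hv => ?_⟩
  rcases eq_or_ne v 0 with rfl | hv0
  · simp only [norm_zero]
    positivity
  have hv_pos : 0 < ‖v‖ := norm_pos_iff.mpr hv0
  obtain ⟨i, hi⟩ := hεa (‖v‖⁻¹ • v) (mem_sphere_zero_iff_norm.mpr (norm_smul_inv_norm (𝕜 := ℝ) hv0))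
  rw [real_inner_smul_left, le_inv_mul_iff₀ hv_pos] at hi
  have hci : c i ≤ ∑ j, |c j| :=
    (le_abs_self _).trans (Finset.single_le_sum (fun j _ => abs_nonneg (c j)) (Finset.mem_univ i))
  have hvi : ⟪v, a i⟫ ≤ c i := mem_iInter.mp hv i
  rw [le_div_iff₀ hε]
  linarith

end

/-- (a) Every fixed point `x` of a nonexpansive map `f` on a real inner product space
satisfies `⟨x, w - f w⟩ ≤ ⟨w, w - f w⟩` for every `w`; in particular the fixed point set
is contained in the intersection of the half-spaces `H_w`. (b) If moreover `V` is finite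
dimensional and `{f(wᵢ) - wᵢ : i = 1, …, m}` illuminates the closed unit ball, then
`⋂ᵢ H_{wᵢ}` is compact. -/
theorem stmt18 {V : Type*} [NormedAddCommGroup V] [InnerProductSpace ℝ V]
    (f : V → V) (hf : ∀ x y : V, ‖f x - f y‖ ≤ ‖x - y‖) :
    (∀ x : V, f x = x → ∀ w : V,
      (inner ℝ x (w - f w) : ℝ) ≤ (inner ℝ w (w - f w) : ℝ)) ∧
    (FiniteDimensional ℝ V → ∀ (m : ℕ) (w : Fin m → V),
      (∀ x ∈ frontier (Metric.closedBall (0 : V) 1), ∃ (i : Fin m) (l : ℝ), 0 < l ∧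
        x + l • (f (w i) - w i) ∈ interior (Metric.closedBall (0 : V) 1)) →
      IsCompact (⋂ i : Fin m,
        {v : V | (inner ℝ v (w i - f (w i)) : ℝ) ≤ (inner ℝ (w i) (w i - f (w i)) : ℝ)})) := by
  refine ⟨fun x hx w => ?_, fun _ m w hill => ?_⟩
  · have hnonneg : 0 ≤ ⟪w - x, w - f w⟫ :=
      inner_sub_sub_nonneg_of_norm_sub_le (by simpa only [hx] using hf w x)
    rw [inner_sub_left] at hnonneg
    linarith
  · have := FiniteDimensional.proper_real V
    refine isCompact_of_isClosed_isBounded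
      (isClosed_iInter fun i => isClosed_le (by fun_prop) continuous_const)
      (isBounded_iInter_setOf_inner_le _ _ fun u hu => ?_)
    obtain ⟨i, l, hl, hmem⟩ := hill u (by rwa [frontier_closedBall (0 : V) one_ne_zero])
    rw [interior_closedBall (0 : V) one_ne_zero] at hmem
    have hneg := inner_neg_of_add_smul_mem_ball (mem_sphere_zero_iff_norm.mp hu) hl hmem
    rw [← neg_sub, inner_neg_right] at hneg
    exact ⟨i, neg_neg_iff_pos.mp hneg⟩
end

section
/- Let n ≥ 2 and let f : ℝⁿ_{>0} → ℝⁿ_{>0} be order-preserving (x ≤ y coordinatewise implies f(x) ≤ f(y) coordinatewise) and homogeneous of degree one (f(αx) = αf(x) for all α > 0). Suppose that for every nonempty proper subset J of {1, …, n} there is a point x^J ∈ ℝⁿ_{>0} with max_{j ∈ J} f(x^J)_j/x^J_j < min_{j ∉ J} f(x^J)_j/x^J_j. Let d_H(x,y) = log(max_i x_i/y_i) − log(min_j x_j/y_j) be Hilbert's metric, and suppose p ∈ ℝⁿ_{>0} and R₀ ≥ 0 satisfy d_H(x^J, p) ≤ R₀ for every nonempty proper subset J. Then every eigenvector x ∈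 ℝⁿ_{>0} of f (i.e., f(x) = λx for some λ > 0) satisfies d_H(x, p) ≤ (2n − 1) R₀. -/
/-- Hilbert's (projective) metric on the interior of the positive cone of `ℝⁿ`:
`d_H(x,y) = log(max_i x_i/y_i) − log(min_j x_j/y_j)`. -/
noncomputable def hilbertDist {n : ℕ} (x y : Fin n → ℝ) : ℝ :=
  Real.log (⨆ i, x i / y i) - Real.log (⨅ j, x j / y j)

private lemma exists_ciSup_eq {n : ℕ} [NeZero n] (g : Fin n → ℝ) :
    ∃ i, (⨆ j, g j) = g i ∧ ∀ j, g j ≤ g i := by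
  obtain ⟨i, hi⟩ := Finite.exists_max g
  exact ⟨i, le_antisymm (ciSup_le hi) (le_ciSup (Finite.bddAbove_range g) i), hi⟩

private lemma exists_ciInf_eq {n : ℕ} [NeZero n] (g : Fin n → ℝ) :
    ∃ i, (⨅ j, g j) = g i ∧ ∀ j, g i ≤ g j := by
  obtain ⟨i, hi⟩ := Finite.exists_min g
  exact ⟨i, le_antisymm (ciInf_le (Finite.bddBelow_range g) i) (le_ciInf hi), hi⟩

private lemma chain_bound {n : ℕ} (u : Fin n → ℝ) (g : ℝ) (hg : 0 ≤ g)
    (h : ∀ i, (∃ k, u i < u k) → ∃ k, u i < u k ∧ u k ≤ u i + g) (j : Fin n) :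
    ∀ c : ℕ, ∀ i, (Finset.univ.filter (fun k => u i < u k)).card ≤ c →
      u j ≤ u i + (c : ℝ) * g := by
  intro c
  induction c with
  | zero =>
    intro i hc
    have hempty : (Finset.univ.filter (fun k => u i < u k)) = ∅ :=
      Finset.card_eq_zero.mp (Nat.le_zero.mp hc)
    have : ¬ (u i < u j) := by
      intro hlt
      have : j ∈ Finset.univ.filter (fun k => u i < u k) := by
        simp [hlt]
      simp [hempty] at this
    push_neg at this
    simpa using this
  | succ c ih =>
    intro i hc
    by_cases hex : ∃ k, u i < u k
    · obtain ⟨k, hik, hkg⟩ := h i hex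
      have hsub : (Finset.univ.filter (fun k' => u k < u k')) ⊆
          (Finset.univ.filter (fun k' => u i < u k')) := by
        intro a ha
        simp only [Finset.mem_filter, Finset.mem_univ, true_and] at ha ⊢
        exact hik.trans ha
      have hkmem : k ∈ (Finset.univ.filter (fun k' => u i < u k')) := by simp [hik]
      have hknot : k ∉ (Finset.univ.filter (fun k' => u k < u k')) := by simp
      have hlt : (Finset.univ.filter (fun k' => u k < u k')).card <
          (Finset.univ.filter (fun k' => u i < u k')).card :=
        Finset.card_lt_card (Finset.ssubset_iff_of_subset hsub |>.mpr ⟨k, hkmem, hknot⟩)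
      have hcard : (Finset.univ.filter (fun k' => u k < u k')).card ≤ c :=
        Nat.lt_succ_iff.mp (lt_of_lt_of_le hlt hc)
      have := ih k hcard
      push_cast
      linarith
    · push_neg at hex
      have := hex j
      have : (0:ℝ) ≤ ((c:ℝ) + 1) * g := by positivity
      push_cast
      linarith [hex j]

/-- Localization of the eigenvectors of an order-preserving homogeneous map `f` on the
positive cone: if for every nonempty proper subset `J` there is a positive vector `x^J`
with `max_{j ∈ J} f(x^J)_j/x^J_j < min_{j ∉ J} f(x^J)_j/x^J_j`, and all the `x^J` lie in
the Hilbert-metric ball of radius `R₀` around `p`, then every eigenvector of `f` lies in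
the Hilbert-metric ball of radius `(2n − 1) R₀` around `p`. -/
theorem stmt19 {n : ℕ} (hn : 2 ≤ n) (f : (Fin n → ℝ) → (Fin n → ℝ))
    (hpos : ∀ x : Fin n → ℝ, (∀ i, 0 < x i) → ∀ i, 0 < f x i)
    (hmono : ∀ x y : Fin n → ℝ, (∀ i, 0 < x i) → (∀ i, 0 < y i) →
      (∀ i, x i ≤ y i) → ∀ i, f x i ≤ f y i)
    (hhom : ∀ α : ℝ, 0 < α → ∀ x : Fin n → ℝ, (∀ i, 0 < x i) → f (α • x) = α • f x)
    (xJ : Finset (Fin n) → Fin n → ℝ)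
    (hxJpos : ∀ J : Finset (Fin n), J.Nonempty → J ≠ Finset.univ → ∀ i, 0 < xJ J i)
    (hxJ : ∀ J : Finset (Fin n), J.Nonempty → J ≠ Finset.univ →
      ∀ j ∈ J, ∀ k ∉ J, f (xJ J) j / xJ J j < f (xJ J) k / xJ J k)
    (p : Fin n → ℝ) (hp : ∀ i, 0 < p i) (R₀ : ℝ) (hR₀ : 0 ≤ R₀)
    (hcirc : ∀ J : Finset (Fin n), J.Nonempty → J ≠ Finset.univ →
      hilbertDist (xJ J) p ≤ R₀) :
    ∀ x : Fin n → ℝ, (∀ i, 0 < x i) → ∀ l : ℝ, 0 < l → f x = l • x →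
      hilbertDist x p ≤ (2 * (n : ℝ) - 1) * R₀ := by
  have hn0 : 0 < n := lt_of_lt_of_le (by norm_num) hn
  haveI : NeZero n := ⟨hn0.ne'⟩
  intro x hx l hl hfx
  by_contra hD
  push_neg at hD
  set u : Fin n → ℝ := fun i => Real.log (x i / p i) with hu
  -- hilbertDist x p in terms of u
  obtain ⟨i₀, hi₀eq, hi₀max⟩ := exists_ciSup_eq (fun i => x i / p i)
  obtain ⟨j₀, hj₀eq, hj₀min⟩ := exists_ciInf_eq (fun i => x i / p i)
  have hDval : hilbertDist x p = u i₀ - u j₀ := by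
    simp only [hilbertDist, hi₀eq, hj₀eq, hu]
  rw [hDval] at hD
  -- find the gap
  have hgap : ∃ i, (∃ k, u i < u k) ∧ ∀ k, u i < u k → u i + 2 * R₀ < u k := by
    by_contra hno
    push_neg at hno
    have hchain : ∀ i, (∃ k, u i < u k) → ∃ k, u i < u k ∧ u k ≤ u i + 2 * R₀ := by
      intro i hex
      obtain ⟨k, hk1, hk2⟩ := hno i hex
      exact ⟨k, hk1, hk2⟩
    have hcard : (Finset.univ.filter (fun k => u j₀ < u k)).card ≤ n - 1 := by
      have hne : (Finset.univ.filter (fun k => u j₀ < u k)) ≠ Finset.univ := by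
        intro hEq
        have : j₀ ∈ Finset.univ.filter (fun k => u j₀ < u k) := by
          rw [hEq]; exact Finset.mem_univ j₀
        simp at this
      have := Finset.card_lt_card ((Finset.ssubset_univ_iff).mpr hne)
      simp only [Finset.card_univ, Fintype.card_fin] at this
      omega
    have := chain_bound u (2 * R₀) (by linarith) hchain i₀ (n - 1) j₀ hcard
    have hcast : ((n - 1 : ℕ) : ℝ) = (n : ℝ) - 1 := by
      have : (1:ℕ) ≤ n := by omega
      push_cast [this]; ring
    rw [hcast] at this
    nlinarith
  obtain ⟨is, ⟨k₀, hk₀⟩, hsep⟩ := hgap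
  set J : Finset (Fin n) := Finset.univ.filter (fun k => u k ≤ u is) with hJ
  have hisJ : is ∈ J := by simp [hJ]
  have hk₀J : k₀ ∉ J := by simp [hJ]; exact hk₀
  have hJne : J ≠ Finset.univ := fun hEq => hk₀J (hEq ▸ Finset.mem_univ k₀)
  have hJcne : Jᶜ.Nonempty := by
    rw [Finset.nonempty_iff_ne_empty]
    intro hEq
    have : J = Finset.univ := by
      have := congrArg (·ᶜ) hEq
      simpa using this
    exact hJne this
  have hJcnu : Jᶜ ≠ Finset.univ := by
    intro hEq
    have : is ∈ Jᶜ := hEq ▸ Finset.mem_univ is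
    exact (Finset.mem_compl.mp this) hisJ
  set y : Fin n → ℝ := xJ Jᶜ with hy
  have hypos : ∀ i, 0 < y i := hxJpos Jᶜ hJcne hJcnu
  have hyR : hilbertDist y p ≤ R₀ := hcirc Jᶜ hJcne hJcnu
  -- log(y a / p a) - log(y b / p b) ≤ R₀ for all a b
  have hylog : ∀ a b, Real.log (y a / p a) - Real.log (y b / p b) ≤ R₀ := by
    intro a b
    have hub : y a / p a ≤ ⨆ i, y i / p i :=
      le_ciSup (f := fun i => y i / p i) (Finite.bddAbove_range _) a
    have hlb : (⨅ i, y i / p i) ≤ y b / p b :=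
      ciInf_le (f := fun i => y i / p i) (Finite.bddBelow_range _) b
    obtain ⟨jm, hjmeq, hjmmin⟩ := exists_ciInf_eq (fun i => y i / p i)
    have hinfpos : 0 < ⨅ i, y i / p i := hjmeq ▸ div_pos (hypos jm) (hp jm)
    have h1 : Real.log (y a / p a) ≤ Real.log (⨆ i, y i / p i) :=
      Real.log_le_log (div_pos (hypos a) (hp a)) hub
    have h2 : Real.log (⨅ i, y i / p i) ≤ Real.log (y b / p b) :=
      Real.log_le_log hinfpos hlb
    have := hyR
    simp only [hilbertDist] at this
    linarith
  -- key comparison: a ∉ J, b ∈ J ⟹ x b / y b < x a / y a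
  have hkey : ∀ a, a ∉ J → ∀ b, b ∈ J → x b / y b < x a / y a := by
    intro a ha b hb
    have hua : u is + 2 * R₀ < u a := by
      apply hsep
      simp only [hJ, Finset.mem_filter, Finset.mem_univ, true_and, not_le] at ha
      exact ha
    have hub : u b ≤ u is := by
      simp only [hJ, Finset.mem_filter, Finset.mem_univ, true_and] at hb
      exact hb
    have hxyapos : 0 < x a / y a := div_pos (hx a) (hypos a)
    have hxybpos : 0 < x b / y b := div_pos (hx b) (hypos b)
    rw [← Real.log_lt_log_iff hxybpos hxyapos]
    have hlogxa : Real.log (x a / y a) = u a - Real.log (y a / p a) := by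
      show _ = Real.log (x a / p a) - _
      rw [Real.log_div (hx a).ne' (hypos a).ne', Real.log_div (hx a).ne' (hp a).ne',
        Real.log_div (hypos a).ne' (hp a).ne']
      ring
    have hlogxb : Real.log (x b / y b) = u b - Real.log (y b / p b) := by
      show _ = Real.log (x b / p b) - _
      rw [Real.log_div (hx b).ne' (hypos b).ne', Real.log_div (hx b).ne' (hp b).ne',
        Real.log_div (hypos b).ne' (hp b).ne']
      ring
    rw [hlogxa, hlogxb]
    have := hylog a b
    linarith
  -- m and M
  obtain ⟨as, haseq, hasmin⟩ := exists_ciInf_eq (fun i => y i / x i)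
  obtain ⟨bs, hbseq, hbsmax⟩ := exists_ciSup_eq (fun i => y i / x i)
  set m : ℝ := y as / x as with hm
  set M : ℝ := y bs / x bs with hM
  have hmpos : 0 < m := div_pos (hypos as) (hx as)
  have hMpos : 0 < M := div_pos (hypos bs) (hx bs)
  -- as ∉ J
  have hasnJ : as ∉ J := by
    intro hmem
    have h1 : x as / y as < x k₀ / y k₀ := hkey k₀ hk₀J as hmem
    have h2 : y k₀ / x k₀ < y as / x as := by
      rw [div_lt_div_iff₀ (hypos as) (hypos k₀)] at h1
      rw [div_lt_div_iff₀ (hx k₀) (hx as)]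
      nlinarith
    exact absurd (hasmin k₀) (not_le.mpr h2)
  -- bs ∈ J
  have hbsJ : bs ∈ J := by
    by_contra hmem
    have h1 : x is / y is < x bs / y bs := hkey bs hmem is hisJ
    have h2 : y bs / x bs < y is / x is := by
      rw [div_lt_div_iff₀ (hypos is) (hypos bs)] at h1
      rw [div_lt_div_iff₀ (hx bs) (hx is)]
      nlinarith
    exact absurd (hbsmax is) (not_le.mpr h2)
  -- monotonicity bounds
  have hmx : ∀ i, m * x i ≤ y i := by
    intro i
    have := hasmin i
    rw [le_div_iff₀ (hx i)] at this
    linarith [this]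
  have hMx : ∀ i, y i ≤ M * x i := by
    intro i
    have := hbsmax i
    rw [div_le_iff₀ (hx i)] at this
    linarith [this]
  have hmxpos : ∀ i, 0 < (m • x) i := fun i => by
    simp only [Pi.smul_apply, smul_eq_mul]; exact mul_pos (by assumption) (hx i)
  have hlow : ∀ i, l * (m * x i) ≤ f y i := by
    intro i
    have h1 := hmono (m • x) y hmxpos hypos (fun i => by
      simpa [Pi.smul_apply, smul_eq_mul] using hmx i) i
    rw [hhom m hmpos x hx, hfx] at h1
    simp only [Pi.smul_apply, smul_eq_mul] at h1
    linarith
  have hMxpos : ∀ i, 0 < (M • x) i := fun i => by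
    simp only [Pi.smul_apply, smul_eq_mul]; exact mul_pos (by assumption) (hx i)
  have hhigh : ∀ i, f y i ≤ l * (M * x i) := by
    intro i
    have h1 := hmono y (M • x) hypos hMxpos (fun i => by
      simpa [Pi.smul_apply, smul_eq_mul] using hMx i) i
    rw [hhom M hMpos x hx, hfx] at h1
    simp only [Pi.smul_apply, smul_eq_mul] at h1
    linarith
  -- the contradiction
  have hmain := hxJ Jᶜ hJcne hJcnu as (Finset.mem_compl.mpr hasnJ) bs
    (by simp only [Finset.mem_compl, not_not]; exact hbsJ)
  rw [← hy] at hmain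
  have hlowa : l ≤ f y as / y as := by
    rw [le_div_iff₀ (hypos as)]
    have h1 : l * (y as / x as * x as) ≤ f y as := hlow as
    rw [div_mul_cancel₀ _ (hx as).ne'] at h1
    exact h1
  have hhighb : f y bs / y bs ≤ l := by
    rw [div_le_iff₀ (hypos bs)]
    have h1 : f y bs ≤ l * (y bs / x bs * x bs) := hhigh bs
    rw [div_mul_cancel₀ _ (hx bs).ne'] at h1
    exact h1
  linarith
end
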